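/- arXiv:1202.4880 — 8 statements merged into one kernel-verified Lean document; each statement's English description precedes it below -/
import Mathlib

section
/- For a geometric popularity distribution q_r = (1-κ)κ^{r-1} on r ≥ 1 with 0 < κ < 1 (infinite object population), the RND miss probability equals M(C) = (1-κ)(C+1)κ^C / (1-κ^{C+1}) for all C ≥ 0. -/
/-- The `C`-th elementary symmetric function of an infinite sequence `q`. -/
noncomputable def esym (q : ℕ → ℝ) (C : ℕ) : ℝ :=
  ∑' S : {S : Finset ℕ // S.card = C}, ∏ j ∈ S.1, q j

-- summability over tuples
lemma summable_pi_geom {κ : ℝ} (h0 : 0 ≤ κ) (h1 : κ < 1) (C : ℕ) :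
    Summable fun a : Fin C → ℕ => ∏ i, κ ^ a i := by
  induction C with
  | zero => exact .of_finite
  | succ n ih =>
    have hg : Summable fun m : ℕ => κ ^ m := summable_geometric_of_lt_one h0 h1
    have hprod : Summable fun p : ℕ × (Fin n → ℕ) => (κ ^ p.1) * ∏ i, κ ^ p.2 i := by
      apply summable_mul_of_summable_norm (f := fun m : ℕ => κ ^ m)
        (g := fun a : Fin n → ℕ => ∏ i, κ ^ a i)
      · simpa [Real.norm_eq_abs, abs_of_nonneg, pow_nonneg h0] using hg
      · have : ∀ a : Fin n → ℕ, ‖∏ i, κ ^ a i‖ = ∏ i, κ ^ a i := by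
          intro a
          rw [Real.norm_eq_abs, abs_of_nonneg]
          exact Finset.prod_nonneg fun i _ => pow_nonneg h0 _
        simpa [this] using ih
    have := hprod.comp_injective (i := fun a : Fin (n+1) → ℕ => (a 0, fun i : Fin n => a i.succ)) ?_
    · convert this using 1
      · rfl
      funext a
      simp [Fin.prod_univ_succ, Function.comp]
    · intro a b hab
      simp only [Prod.mk.injEq] at hab
      funext i
      refine Fin.cases hab.1 (fun j => ?_) i
      exact congrFun hab.2 j

lemma prod_pow_orderIso {κ : ℝ} {C : ℕ} (S : Finset ℕ) (h : S.card = C) :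
    (∏ i : Fin C, κ ^ (S.orderIsoOfFin h i : ℕ)) = ∏ j ∈ S, κ ^ j := by
  rw [← Finset.prod_coe_sort S (fun j => κ ^ j)]
  exact Equiv.prod_comp (S.orderIsoOfFin h).toEquiv (fun x => κ ^ (x : ℕ))

lemma summable_g {κ : ℝ} (h0 : 0 ≤ κ) (h1 : κ < 1) (C : ℕ) :
    Summable fun S : {S : Finset ℕ // S.card = C} => ∏ j ∈ S.1, κ ^ j := by
  have hinj : Function.Injective
      (fun S : {S : Finset ℕ // S.card = C} => fun i : Fin C => (S.1.orderIsoOfFin S.2 i : ℕ)) := by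
    intro S T hST
    have key : ∀ U : {S : Finset ℕ // S.card = C},
        Set.range (fun i : Fin C => (U.1.orderIsoOfFin U.2 i : ℕ)) = U.1 := by
      intro U
      rw [show (fun i : Fin C => ((U.1.orderIsoOfFin U.2 i : ℕ))) = ⇑(U.1.orderEmbOfFin U.2)
        from funext fun i => (Finset.coe_orderIsoOfFin_apply U.1 U.2 i)]
      exact Finset.range_orderEmbOfFin U.1 U.2
    have : (S.1 : Set ℕ) = T.1 := by
      rw [← key S, ← key T]; exact congrArg Set.range hST
    exact Subtype.ext (Finset.coe_injective this)
  have := (summable_pi_geom h0 h1 C).comp_injective hinj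
  convert this using 1
  · rfl
  funext S
  exact (prod_pow_orderIso S.1 S.2).symm

lemma shift_prod {κ : ℝ} (S : Finset ℕ) :
    ∏ j ∈ S.image (· + 1), κ ^ j = κ ^ S.card * ∏ j ∈ S, κ ^ j := by
  rw [Finset.prod_image (fun a _ b _ h => by omega)]
  simp [pow_succ, Finset.prod_mul_distrib, mul_comm]

noncomputable def F (κ : ℝ) (C : ℕ) : ℝ :=
  ∑' S : {S : Finset ℕ // S.card = C}, ∏ j ∈ S.1, κ ^ j

lemma F_pos {κ : ℝ} (h0 : 0 < κ) (h1 : κ < 1) (C : ℕ) : 0 < F κ C := by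
  refine Summable.tsum_pos (summable_g h0.le h1 C)
    (fun S => Finset.prod_nonneg fun j _ => pow_nonneg h0.le _)
    ⟨Finset.range C, Finset.card_range C⟩ ?_
  exact Finset.prod_pos fun j _ => pow_pos h0 _


noncomputable def e₁ (C : ℕ) : {S : Finset ℕ // S.card = C} ≃
    {T : {S : Finset ℕ // S.card = C + 1} // 0 ∈ T.1} := by
  have hmem0 : ∀ S : Finset ℕ, (0 : ℕ) ∉ S.image (· + 1) := by
    intro S h
    obtain ⟨a, _, ha⟩ := Finset.mem_image.mp h
    omega
  refine Equiv.ofBijective (fun S =>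
    ⟨⟨insert 0 (S.1.image (· + 1)),
      by rw [Finset.card_insert_of_notMem (hmem0 S.1),
        Finset.card_image_of_injective _ (fun a b h => by omega), S.2],
      ⟩, Finset.mem_insert_self 0 _⟩) ⟨?_, ?_⟩
  · intro S T hST
    have h : (insert 0 (S.1.image (· + 1))).erase 0 = (insert 0 (T.1.image (· + 1))).erase 0 := by
      have := congrArg (fun x : {T : {S : Finset ℕ // S.card = C + 1} // 0 ∈ T.1} =>
        x.1.1.erase 0) hST
      exact this
    rw [Finset.erase_insert (hmem0 S.1), Finset.erase_insert (hmem0 T.1)] at h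
    exact Subtype.ext (Finset.image_injective (fun a b hab => by omega) h)
  · rintro ⟨⟨T, hT⟩, h0T⟩
    simp only at h0T
    refine ⟨⟨(T.erase 0).image (· - 1), ?_⟩, ?_⟩
    · have hinj : Set.InjOn (· - 1 : ℕ → ℕ) (T.erase 0) := by
        intro a ha b hb hab
        have ha' : a ≠ 0 := (Finset.mem_erase.mp (Finset.mem_coe.mp ha)).1
        have hb' : b ≠ 0 := (Finset.mem_erase.mp (Finset.mem_coe.mp hb)).1
        have hab' : a - 1 = b - 1 := hab
        omega
      rw [Finset.card_image_of_injOn hinj, Finset.card_erase_of_mem h0T, hT]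
      omega
    · apply Subtype.ext; apply Subtype.ext
      show insert 0 (((T.erase 0).image (· - 1)).image (· + 1)) = T
      ext a
      simp only [Finset.mem_insert, Finset.mem_image, Finset.mem_erase]
      constructor
      · rintro (rfl | ⟨b, ⟨c, ⟨hc0, hcT⟩, rfl⟩, rfl⟩)
        · exact h0T
        · have : c - 1 + 1 = c := by omega
          rwa [this]
      · intro ha
        by_cases h : a = 0
        · exact Or.inl h
        · exact Or.inr ⟨a - 1, ⟨a, ⟨h, ha⟩, rfl⟩, by omega⟩

noncomputable def e₂ (C : ℕ) : {S : Finset ℕ // S.card = C + 1} ≃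
    {T : {S : Finset ℕ // S.card = C + 1} // 0 ∉ T.1} := by
  have hmem0 : ∀ S : Finset ℕ, (0 : ℕ) ∉ S.image (· + 1) := by
    intro S h
    obtain ⟨a, _, ha⟩ := Finset.mem_image.mp h
    omega
  refine Equiv.ofBijective (fun S =>
    ⟨⟨S.1.image (· + 1),
      by rw [Finset.card_image_of_injective _ (fun a b h => by omega), S.2]⟩,
      hmem0 S.1⟩) ⟨?_, ?_⟩
  · intro S T hST
    have h : S.1.image (· + 1) = T.1.image (· + 1) := by
      have := congrArg (fun x : {T : {S : Finset ℕ // S.card = C + 1} // 0 ∉ T.1} =>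
        x.1.1) hST
      exact this
    exact Subtype.ext (Finset.image_injective (fun a b hab => by omega) h)
  · rintro ⟨⟨T, hT⟩, h0T⟩
    simp only at h0T
    refine ⟨⟨T.image (· - 1), ?_⟩, ?_⟩
    · have hinj : Set.InjOn (· - 1 : ℕ → ℕ) T := by
        intro a ha b hb hab
        have ha' : a ≠ 0 := fun h => h0T (h ▸ Finset.mem_coe.mp ha)
        have hb' : b ≠ 0 := fun h => h0T (h ▸ Finset.mem_coe.mp hb)
        have hab' : a - 1 = b - 1 := hab
        omega
      rw [Finset.card_image_of_injOn hinj, hT]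
    · apply Subtype.ext; apply Subtype.ext
      show (T.image (· - 1)).image (· + 1) = T
      ext a
      simp only [Finset.mem_image]
      constructor
      · rintro ⟨b, ⟨c, hc, rfl⟩, rfl⟩
        have hc0 : c ≠ 0 := fun h => h0T (h ▸ hc)
        have : c - 1 + 1 = c := by omega
        rwa [this]
      · intro ha
        have ha0 : a ≠ 0 := fun h => h0T (h ▸ ha)
        exact ⟨a - 1, ⟨a, ha, rfl⟩, by omega⟩

lemma F_rec {κ : ℝ} (h0 : 0 < κ) (h1 : κ < 1) (C : ℕ) :
    F κ (C + 1) = κ ^ C * F κ C + κ ^ (C + 1) * F κ (C + 1) := by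
  classical
  have hmem0 : ∀ S : Finset ℕ, (0 : ℕ) ∉ S.image (· + 1) := by
    intro S h
    obtain ⟨a, _, ha⟩ := Finset.mem_image.mp h
    omega
  set s : Set {S : Finset ℕ // S.card = C + 1} := {T | 0 ∈ T.1} with hs
  have hsum := summable_g h0.le h1 (C + 1)
  have hsplit := Summable.tsum_subtype_add_tsum_subtype_compl
    (f := fun S : {S : Finset ℕ // S.card = C + 1} => ∏ j ∈ S.1, κ ^ j) hsum s
  have h₁ : (∑' x : s, ∏ j ∈ (x : {S : Finset ℕ // S.card = C + 1}).1, κ ^ j)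
      = κ ^ C * F κ C := by
    show (∑' x : {T : {S : Finset ℕ // S.card = C + 1} // 0 ∈ T.1}, ∏ j ∈ x.1.1, κ ^ j) = _
    rw [← Equiv.tsum_eq (e₁ C) (fun x : {T : {S : Finset ℕ // S.card = C + 1} // 0 ∈ T.1} =>
      ∏ j ∈ x.1.1, κ ^ j)]
    have : ∀ S : {S : Finset ℕ // S.card = C},
        (∏ j ∈ ((e₁ C) S).1.1, κ ^ j) = κ ^ C * ∏ j ∈ S.1, κ ^ j := by
      intro S
      show (∏ j ∈ insert 0 (S.1.image (· + 1)), κ ^ j) = _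
      rw [Finset.prod_insert (hmem0 S.1), shift_prod, S.2]
      simp
    simp_rw [this]
    exact tsum_mul_left
  have h₂ : (∑' x : ↥sᶜ, ∏ j ∈ (x : {S : Finset ℕ // S.card = C + 1}).1, κ ^ j)
      = κ ^ (C + 1) * F κ (C + 1) := by
    show (∑' x : {T : {S : Finset ℕ // S.card = C + 1} // 0 ∉ T.1}, ∏ j ∈ x.1.1, κ ^ j) = _
    rw [← Equiv.tsum_eq (e₂ C) (fun x : {T : {S : Finset ℕ // S.card = C + 1} // 0 ∉ T.1} =>
      ∏ j ∈ x.1.1, κ ^ j)]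
    have : ∀ S : {S : Finset ℕ // S.card = C + 1},
        (∏ j ∈ ((e₂ C) S).1.1, κ ^ j) = κ ^ (C + 1) * ∏ j ∈ S.1, κ ^ j := by
      intro S
      show (∏ j ∈ S.1.image (· + 1), κ ^ j) = _
      rw [shift_prod, S.2]
    simp_rw [this]
    exact tsum_mul_left
  calc F κ (C + 1) = _ := hsplit.symm
    _ = κ ^ C * F κ C + κ ^ (C + 1) * F κ (C + 1) := by rw [← h₁, ← h₂]

lemma esym_eq (κ : ℝ) (C : ℕ) :
    esym (fun r => (1 - κ) * κ ^ r) C = (1 - κ) ^ C * F κ C := by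
  unfold esym F
  rw [← tsum_mul_left]
  congr 1
  funext S
  rw [Finset.prod_mul_distrib, Finset.prod_const, S.2]


/-- For a geometric popularity distribution `q_r = (1-κ)κ^{r-1}`, `r ≥ 1`
(indexed here by `r : ℕ` as `(1-κ)κ^r`), the RND miss probability
`M(C) = (C+1) G(C+1)/G(C)` equals `(1-κ)(C+1)κ^C/(1-κ^{C+1})`. -/
theorem stmt2 (κ : ℝ) (h0 : 0 < κ) (h1 : κ < 1) (C : ℕ) :
    (C + 1) * esym (fun r => (1 - κ) * κ ^ r) (C + 1) / esym (fun r => (1 - κ) * κ ^ r) C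
      = (1 - κ) * (C + 1) * κ ^ C / (1 - κ ^ (C + 1)) := by
  have hb := F_rec h0 h1 C
  have key : F κ (C + 1) * (1 - κ ^ (C + 1)) = κ ^ C * F κ C := by
    linear_combination hb
  have ha : F κ C ≠ 0 := (F_pos h0 h1 C).ne'
  have hk1 : (1 : ℝ) - κ ≠ 0 := by linarith
  have hden : (1 : ℝ) - κ ^ (C + 1) ≠ 0 := by
    have : κ ^ (C + 1) < 1 := pow_lt_one₀ h0.le h1 (Nat.succ_ne_zero C)
    linarith
  rw [esym_eq, esym_eq]
  have hk1p : (1 - κ) ^ C ≠ 0 := pow_ne_zero _ hk1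
  field_simp
  ring_nf
  ring_nf at key
  linear_combination (1 - κ) ^ (C + 1) * key
end

section
/- For a Zipf popularity distribution with exponent α = 2, i.e. q_r = A/r² with A = 6/π², the elementary symmetric functions satisfy G(C) = (π²A)^C/(2C+1)! for all C ≥ 0, and consequently the RND miss probability equals M(C) = (C+1)G(C+1)/G(C) = 3/(2C+3). -/
open Real

open Filter Finset Topology
open scoped ENNReal NNReal

namespace Stmt4Aux

/-- base sequence `b r = 1/(r+1)^2`. -/
noncomputable def b : ℕ → ℝ := fun r => 1 / ((r : ℝ) + 1) ^ 2

lemma b_nonneg (r : ℕ) : 0 ≤ b r := by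
  unfold b; positivity

lemma summable_b : Summable b := by
  have := (summable_nat_add_iff (f := fun n : ℕ => 1 / (n : ℝ) ^ 2) 1).mpr
    ((Real.summable_one_div_nat_pow (p := 2)).mpr one_lt_two)
  refine this.congr fun n => ?_
  unfold b
  push_cast
  ring_nf

/-- target coefficients -/
noncomputable def v : ℕ → ℝ := fun k => π ^ (2 * k) / ((2 * k + 1).factorial : ℝ)

lemma v_nonneg (k : ℕ) : 0 ≤ v k := by unfold v; positivity

lemma summable_v_mul_pow (t : ℝ) : Summable fun k => v k * t ^ k := by
  refine Summable.of_abs ?_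
  refine Summable.of_nonneg_of_le (fun k => abs_nonneg _)
    (fun k => ?_) (Real.summable_pow_div_factorial (π ^ 2 * |t|))
  have h1 : |v k * t ^ k| = π ^ (2 * k) * |t| ^ k / ((2 * k + 1).factorial : ℝ) := by
    rw [abs_mul, abs_pow]
    unfold v
    rw [abs_of_nonneg (by positivity)]
    ring
  rw [h1, pow_mul, ← mul_pow]
  apply div_le_div_of_nonneg_left ?_ ?_ ?_ |>.trans_eq rfl
  · positivity
  · exact_mod_cast Nat.factorial_pos k
  · exact_mod_cast Nat.factorial_le (by omega)

lemma sum_powerset_prod (a : ℕ → ℝ) (n : ℕ) :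
    ∑ S ∈ (Finset.range n).powerset, ∏ j ∈ S, a j
      = ∏ j ∈ Finset.range n, (1 + a j) := by
  have := Finset.prod_add a (fun _ => (1 : ℝ)) (Finset.range n)
  simp only [Finset.prod_const_one, mul_one] at this
  rw [← this]
  exact Finset.prod_congr rfl fun j _ => by ring

lemma summable_prod_finset {q : ℕ → ℝ} (hq : ∀ j, 0 ≤ q j) (hsum : Summable q) :
    Summable fun S : Finset ℕ => ∏ j ∈ S, q j := by
  refine summable_of_sum_le (c := Real.exp (∑' j, q j))
    (fun S => Finset.prod_nonneg fun j _ => hq j) (fun T => ?_)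
  set n := (T.sup fun S => S.sup id) + 1 with hn
  have hTn : ∀ S ∈ T, S ⊆ Finset.range n := by
    intro S hS j hj
    refine Finset.mem_range.mpr (Nat.lt_succ_of_le ?_)
    exact le_trans (Finset.le_sup (f := id) hj) (Finset.le_sup (f := fun S => S.sup id) hS)
  calc ∑ S ∈ T, ∏ j ∈ S, q j
      ≤ ∑ S ∈ (Finset.range n).powerset, ∏ j ∈ S, q j := by
        refine Finset.sum_le_sum_of_subset_of_nonneg (fun S hS => ?_)
          (fun S _ _ => Finset.prod_nonneg fun j _ => hq j)
        exact Finset.mem_powerset.mpr (hTn S hS)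
    _ = ∏ j ∈ Finset.range n, (1 + q j) := sum_powerset_prod q n
    _ ≤ ∏ j ∈ Finset.range n, Real.exp (q j) := by
        refine Finset.prod_le_prod (fun j _ => by have := hq j; linarith) (fun j _ => ?_)
        have := Real.add_one_le_exp (q j); linarith
    _ = Real.exp (∑ j ∈ Finset.range n, q j) := (Real.exp_sum _ _).symm
    _ ≤ Real.exp (∑' j, q j) := by
        apply Real.exp_le_exp.mpr
        exact Summable.sum_le_tsum _ (fun j _ => hq j) hsum

lemma tendsto_prod (t : ℝ) :
    Tendsto (fun n => ∏ j ∈ Finset.range n, (1 + t * b j)) atTop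
      (𝓝 (∑' k, v k * t ^ k)) := by
  obtain ⟨z, hz⟩ : ∃ z : ℂ, z ^ 2 = -(t : ℂ) := by
    rcases le_total t 0 with h | h
    · refine ⟨(Real.sqrt (-t) : ℝ), ?_⟩
      rw [← Complex.ofReal_pow, Real.sq_sqrt (by linarith)]
      push_cast
      ring
    · refine ⟨Complex.I * (Real.sqrt t : ℝ), ?_⟩
      rw [mul_pow, Complex.I_sq, ← Complex.ofReal_pow, Real.sq_sqrt h]
      ring
  by_cases hz0 : z = 0
  · have ht : t = 0 := by
      have h0 : -(t : ℂ) = 0 := by rw [← hz, hz0]; ring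
      exact_mod_cast neg_eq_zero.mp h0
    subst ht
    have h2 : (∑' k, v k * (0 : ℝ) ^ k) = 1 := by
      rw [tsum_eq_single 0 (fun k hk => by simp [zero_pow hk])]
      simp [v]
    rw [h2]
    refine Tendsto.congr (fun n => ?_) tendsto_const_nhds
    simp
  · have hw := (summable_v_mul_pow t).hasSum
    set w := ∑' k, v k * t ^ k with hwdef
    have ht : (t : ℂ) = -z ^ 2 := by rw [hz]; ring
    have hc : HasSum (fun k => ((π : ℂ) * z) * ((v k * t ^ k : ℝ) : ℂ))
        (((π : ℂ) * z) * (w : ℂ)) := (Complex.ofRealCLM.hasSum hw).mul_left _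
    have hterm : ∀ k : ℕ, ((π : ℂ) * z) * ((v k * t ^ k : ℝ) : ℂ)
        = (-1) ^ k * ((π : ℂ) * z) ^ (2 * k + 1) / ((2 * k + 1).factorial : ℂ) := by
      intro k
      have h1 : ((v k * t ^ k : ℝ) : ℂ)
          = (π : ℂ) ^ (2 * k) * (t : ℂ) ^ k / ((2 * k + 1).factorial : ℂ) := by
        unfold v; push_cast; ring
      rw [h1, ht, neg_pow, ← pow_mul]
      ring
    have hc2 : HasSum (fun k : ℕ => (-1) ^ k * ((π : ℂ) * z) ^ (2 * k + 1)
        / ((2 * k + 1).factorial : ℂ)) (((π : ℂ) * z) * (w : ℂ)) := by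
      simpa only [hterm] using hc
    have hsin' : Complex.sin ((π : ℂ) * z) = ((π : ℂ) * z) * (w : ℂ) :=
      (Complex.hasSum_sin ((π : ℂ) * z)).unique hc2
    have hE := Complex.tendsto_euler_sin_prod z
    have heq : ∀ n : ℕ, (π : ℂ) * z * ∏ j ∈ Finset.range n, ((1 : ℂ) - z ^ 2 / ((j : ℂ) + 1) ^ 2)
        = (π : ℂ) * z * ((∏ j ∈ Finset.range n, (1 + t * b j) : ℝ) : ℂ) := by
      intro n
      congr 1
      rw [Complex.ofReal_prod]
      refine Finset.prod_congr rfl fun j _ => ?_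
      unfold b
      push_cast
      rw [hz, neg_div, sub_neg_eq_add, mul_one_div]
    rw [funext heq, hsin'] at hE
    have hpz : (π : ℂ) * z ≠ 0 :=
      mul_ne_zero (Complex.ofReal_ne_zero.mpr Real.pi_ne_zero) hz0
    have hE2 : Tendsto (fun n => ((∏ j ∈ Finset.range n, (1 + t * b j) : ℝ) : ℂ)) atTop
        (𝓝 (w : ℂ)) := by
      have h3 := hE.const_mul (((π : ℂ) * z)⁻¹)
      rw [inv_mul_cancel_left₀ hpz] at h3
      exact h3.congr fun n => inv_mul_cancel_left₀ hpz _
    have h4 := (Complex.continuous_re.tendsto _).comp hE2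
    rw [Complex.ofReal_re] at h4
    exact h4.congr fun n => Complex.ofReal_re _

lemma hasSum_finsets (t : ℝ) :
    HasSum (fun S : Finset ℕ => ∏ j ∈ S, (t * b j)) (∑' k, v k * t ^ k) := by
  have habs : Summable fun S : Finset ℕ => |∏ j ∈ S, (t * b j)| := by
    refine (summable_prod_finset (q := fun j => |t| * b j)
      (fun j => mul_nonneg (abs_nonneg t) (b_nonneg j)) (summable_b.mul_left _)).congr
      fun S => ?_
    rw [Finset.abs_prod]
    exact Finset.prod_congr rfl fun j _ => by rw [abs_mul, abs_of_nonneg (b_nonneg j)]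
  have hsummable := habs.of_abs
  have H := hsummable.hasSum
  have hF : Tendsto (fun n : ℕ => (Finset.range n).powerset) atTop atTop := by
    refine tendsto_atTop_finset_of_monotone (fun m n hmn => ?_) (fun S => ?_)
    · exact Finset.powerset_mono.mpr (Finset.range_subset_range.mpr hmn)
    · obtain ⟨n, hn⟩ := S.exists_nat_subset_range
      exact ⟨n, Finset.mem_powerset.mpr hn⟩
  have h1 := H.comp hF
  have h2 : Tendsto (fun n : ℕ => ∏ j ∈ Finset.range n, (1 + t * b j)) atTop
      (𝓝 (∑' S : Finset ℕ, ∏ j ∈ S, (t * b j))) := by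
    refine h1.congr fun n => ?_
    exact sum_powerset_prod (fun j => t * b j) n
  have h3 := tendsto_nhds_unique h2 (tendsto_prod t)
  rwa [h3] at H

lemma esym_smul (f : ℕ → ℝ) (t : ℝ) (k : ℕ) :
    esym (fun j => t * f j) k = t ^ k * esym f k := by
  unfold esym
  rw [← tsum_mul_left]
  refine tsum_congr fun S => ?_
  rw [Finset.prod_mul_distrib, Finset.prod_const, S.2]

lemma hasSum_esym (t : ℝ) :
    HasSum (fun k => t ^ k * esym b k) (∑' k, v k * t ^ k) := by
  have H := (hasSum_finsets t).tsum_fiberwise Finset.card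
  have heq : ∀ k : ℕ, (∑' S : (Finset.card ⁻¹' {k} : Set (Finset ℕ)),
      ∏ j ∈ (S : Finset ℕ), (t * b j)) = t ^ k * esym b k := by
    intro k
    rw [← esym_smul]
    rfl
  exact (funext heq) ▸ H

lemma esym_b_nonneg (k : ℕ) : 0 ≤ esym b k := by
  unfold esym
  exact tsum_nonneg fun S => Finset.prod_nonneg fun j _ => b_nonneg j

lemma esym_b_eq_v : esym b = v := by
  have hble : ∀ k, esym b k ≤ ∑' k, v k * (1 : ℝ) ^ k := by
    intro k
    have h := le_hasSum (hasSum_esym 1) k (fun j _ => by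
      have := esym_b_nonneg j; positivity)
    simpa using h
  have hvle : ∀ k, v k ≤ ∑' k, v k * (1 : ℝ) ^ k := by
    intro k
    have h := le_hasSum (summable_v_mul_pow 1).hasSum k (fun j _ => by
      have := v_nonneg j; positivity)
    simpa using h
  have hprad : (1 : ℝ≥0∞) ≤ (FormalMultilinearSeries.ofScalars ℝ (esym b)).radius := by
    have h := (FormalMultilinearSeries.ofScalars ℝ (esym b)).le_radius_of_bound
      (∑' k, v k * (1 : ℝ) ^ k) (r := 1) (fun n => by
        rw [FormalMultilinearSeries.ofScalars_norm]
        simpa [abs_of_nonneg (esym_b_nonneg n)] using hble n)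
    simpa using h
  have hqrad : (1 : ℝ≥0∞) ≤ (FormalMultilinearSeries.ofScalars ℝ v).radius := by
    have h := (FormalMultilinearSeries.ofScalars ℝ v).le_radius_of_bound
      (∑' k, v k * (1 : ℝ) ^ k) (r := 1) (fun n => by
        rw [FormalMultilinearSeries.ofScalars_norm]
        simpa [abs_of_nonneg (v_nonneg n)] using hvle n)
    simpa using h
  have hsum_eq : (FormalMultilinearSeries.ofScalars ℝ (esym b)).sum
      = (FormalMultilinearSeries.ofScalars ℝ v).sum := by
    funext t
    show FormalMultilinearSeries.ofScalarsSum (esym b) t = FormalMultilinearSeries.ofScalarsSum v t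
    rw [FormalMultilinearSeries.ofScalars_sum_eq, FormalMultilinearSeries.ofScalars_sum_eq]
    simp only [smul_eq_mul]
    calc (∑' n, esym b n * t ^ n) = ∑' n, t ^ n * esym b n := tsum_congr fun n => mul_comm _ _
      _ = ∑' k, v k * t ^ k := (hasSum_esym t).tsum_eq
  have h0p : (0 : ℝ≥0∞) < (FormalMultilinearSeries.ofScalars ℝ (esym b)).radius :=
    lt_of_lt_of_le one_pos hprad
  have h0q : (0 : ℝ≥0∞) < (FormalMultilinearSeries.ofScalars ℝ v).radius :=
    lt_of_lt_of_le one_pos hqrad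
  have hps := ((FormalMultilinearSeries.ofScalars ℝ (esym b)).hasFPowerSeriesOnBall
    h0p).hasFPowerSeriesAt
  have hqs' := ((FormalMultilinearSeries.ofScalars ℝ v).hasFPowerSeriesOnBall
    h0q).hasFPowerSeriesAt
  rw [← hsum_eq] at hqs'
  have hpq := hps.eq_formalMultilinearSeries hqs'
  exact (FormalMultilinearSeries.ofScalars_series_eq_iff ℝ _ _).mp hpq

end Stmt4Aux

open Stmt4Aux

/-- For the Zipf distribution with exponent `α = 2`, i.e. `q_r = A/r²` with `A = 6/π²`
(indexed here by `r : ℕ` as `A/(r+1)²`), we have `G(C) = (π²A)^C/(2C+1)!` and the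
RND miss probability equals `M(C) = (C+1)G(C+1)/G(C) = 3/(2C+3)`. -/
theorem stmt4 (C : ℕ) :
    esym (fun r => (6 / π ^ 2) / ((r : ℝ) + 1) ^ 2) C
        = (π ^ 2 * (6 / π ^ 2)) ^ C / ((2 * C + 1).factorial : ℝ) ∧
      (C + 1) * esym (fun r => (6 / π ^ 2) / ((r : ℝ) + 1) ^ 2) (C + 1) /
          esym (fun r => (6 / π ^ 2) / ((r : ℝ) + 1) ^ 2) C
        = 3 / (2 * (C : ℝ) + 3) := by
  have hpi : (π : ℝ) ≠ 0 := Real.pi_ne_zero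
  have hfun : (fun r : ℕ => (6 / π ^ 2) / ((r : ℝ) + 1) ^ 2)
      = fun r => (6 / π ^ 2) * b r := by
    funext r
    unfold b
    rw [mul_one_div]
  have key : ∀ k : ℕ, esym (fun r : ℕ => (6 / π ^ 2) / ((r : ℝ) + 1) ^ 2) k
      = (6 : ℝ) ^ k / ((2 * k + 1).factorial : ℝ) := by
    intro k
    rw [hfun, esym_smul, esym_b_eq_v]
    unfold v
    rw [div_pow, pow_mul]
    field_simp
  have hX : (π ^ 2 * (6 / π ^ 2) : ℝ) = 6 := by field_simp
  constructor
  · rw [key C, hX]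
  · rw [key C, key (C + 1)]
    have hf : ((2 * (C + 1) + 1).factorial : ℝ)
        = (2 * (C : ℝ) + 3) * (2 * (C : ℝ) + 2) * ((2 * C + 1).factorial : ℝ) := by
      have : 2 * (C + 1) + 1 = (2 * C + 1) + 1 + 1 := by omega
      rw [this, Nat.factorial_succ, Nat.factorial_succ]
      push_cast
      ring
    rw [hf]
    have h1 : ((2 * C + 1).factorial : ℝ) ≠ 0 := by
      exact_mod_cast (Nat.factorial_pos _).ne'
    have h2 : (2 * (C : ℝ) + 3) ≠ 0 := by positivity
    have h3 : (2 * (C : ℝ) + 2) ≠ 0 := by positivity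
    field_simp
    ring
end

section
/- For a probability distribution (q_r) with unbounded support (q_r → 0 as r → ∞) and fixed cache size C, the per-object miss probability M_r(C) = 1 + Σ_{ℓ=0}^{C-1} (-q_r)^{C-ℓ} G(ℓ)/G(C) tends to 1 as r → ∞; consequently the miss output distribution q_r(2) = q_r M_r(C)/M(C) satisfies q_r(2) ~ q_r/M(C) as r → ∞. -/
open Filter

/-- The `C`-th elementary symmetric function of `q` excluding the index `r`. -/
noncomputable def esymWithout (q : ℕ → ℝ) (r C : ℕ) : ℝ :=
  ∑' S : {S : Finset ℕ // S.card = C ∧ r ∉ S}, ∏ j ∈ S.1, q j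

private lemma summable_fin_prod (q : ℕ → ℝ) (hq : ∀ j, 0 ≤ q j) (hsum : Summable q) :
    ∀ C : ℕ, Summable (fun v : Fin C → ℕ => ∏ i, q (v i)) := by
  intro C
  induction C with
  | zero => exact Summable.of_finite
  | succ n ih =>
    have h := hsum.mul_of_nonneg ih (fun j => hq j)
      (fun v => Finset.prod_nonneg fun i _ => hq _)
    have h2 := h.comp_injective (Fin.consEquiv fun _ : Fin (n + 1) => ℕ).symm.injective
    exact h2.congr fun v => by
      rw [Fin.prod_univ_succ]; rfl

private lemma prod_eq_comp (q : ℕ → ℝ) (C : ℕ) (S : {S : Finset ℕ // S.card = C}) :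
    ∏ j ∈ S.1, q j = ∏ i : Fin C, q (S.1.orderEmbOfFin S.2 i) := by
  rw [← Finset.prod_coe_sort S.1 q]
  exact (Fintype.prod_equiv (S.1.orderIsoOfFin S.2).toEquiv
    (fun i => q (S.1.orderEmbOfFin S.2 i)) (fun x => q x)
    (fun i => by
      show q (S.1.orderEmbOfFin S.2 i) = q ((S.1.orderIsoOfFin S.2) i)
      exact congrArg q (Finset.coe_orderIsoOfFin_apply S.1 S.2 i).symm)).symm

private lemma summable_esym (q : ℕ → ℝ) (hq : ∀ j, 0 ≤ q j) (hsum : Summable q) (C : ℕ) :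
    Summable (fun S : {S : Finset ℕ // S.card = C} => ∏ j ∈ S.1, q j) := by
  have hg := summable_fin_prod q hq hsum C
  have hinj : Function.Injective
      (fun S : {S : Finset ℕ // S.card = C} => fun i => S.1.orderEmbOfFin S.2 i) := by
    intro S T h
    apply Subtype.ext
    apply Finset.coe_injective
    rw [← Finset.range_orderEmbOfFin S.1 S.2, ← Finset.range_orderEmbOfFin T.1 T.2]
    exact congrArg Set.range h
  exact (hg.comp_injective hinj).congr fun S => (prod_eq_comp q C S).symm

private lemma esymWithout_eq_of_zero (q : ℕ → ℝ) (r : ℕ) :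
    esymWithout q r 0 = esym q 0 := by
  unfold esymWithout esym
  exact Equiv.tsum_eq
    (⟨fun x => ⟨x.1, x.2.1⟩, fun x => ⟨x.1, x.2, by
        rw [Finset.card_eq_zero.mp x.2]; exact Finset.notMem_empty r⟩,
      fun x => rfl, fun x => rfl⟩ :
      {S : Finset ℕ // S.card = 0 ∧ r ∉ S} ≃ {S : Finset ℕ // S.card = 0})
    (fun S => ∏ j ∈ S.1, q j)

/-- For a popularity distribution with `q_r → 0` and fixed cache size `C`, the
per-object miss probability `M_r(C) = G_r(C)/G(C)` tends to `1` as `r → ∞`, and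
consequently `q_r(2) = q_r M_r(C)/M(C)` satisfies `q_r(2) ~ q_r/M(C)` as `r → ∞`,
with `M(C) = (C+1)G(C+1)/G(C)`. -/
theorem stmt8 (q : ℕ → ℝ) (hq : ∀ j, 0 < q j) (hsum : Summable q)
    (hq0 : Tendsto q atTop (nhds 0)) (C : ℕ)
    (hGC : 0 < esym q C) (hGC1 : 0 < esym q (C + 1)) :
    Tendsto (fun r => esymWithout q r C / esym q C) atTop (nhds 1) ∧
      Asymptotics.IsEquivalent atTop
        (fun r => q r * (esymWithout q r C / esym q C) /
          ((C + 1) * esym q (C + 1) / esym q C))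
        (fun r => q r / ((C + 1) * esym q (C + 1) / esym q C)) := by
  have hqle : ∀ j, 0 ≤ q j := fun j => (hq j).le
  have key : Tendsto (fun r => esymWithout q r C / esym q C) atTop (nhds 1) := by
    rcases Nat.eq_zero_or_pos C with hC0 | hCpos
    · subst hC0
      have h1 : ∀ r, esymWithout q r 0 / esym q 0 = 1 := fun r => by
        rw [esymWithout_eq_of_zero, div_self hGC.ne']
      simp only [h1]
      exact tendsto_const_nhds
    · obtain ⟨D, rfl⟩ : ∃ D, C = D + 1 := ⟨C - 1, (Nat.succ_pred_eq_of_pos hCpos).symm⟩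
      set f : {S : Finset ℕ // S.card = D + 1} → ℝ := fun S => ∏ j ∈ S.1, q j with hf
      have hsumf := summable_esym q hqle hsum (D + 1)
      have hsumD := summable_esym q hqle hsum D
      -- per-r splitting
      have hsplit : ∀ r : ℕ, esymWithout q r (D + 1) =
          esym q (D + 1) - ∑' x : ↥{S : {S : Finset ℕ // S.card = D + 1} | r ∈ S.1}, f x.1 := by
        intro r
        have H := hsumf.tsum_subtype_add_tsum_subtype_compl {S | r ∈ S.1}
        have hE : esymWithout q r (D + 1) =
            ∑' x : ↥({S : {S : Finset ℕ // S.card = D + 1} | r ∈ S.1}ᶜ), f x.1 := by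
          unfold esymWithout
          exact Equiv.tsum_eq
            (⟨fun x => ⟨⟨x.1, x.2.1⟩, x.2.2⟩, fun x => ⟨x.1.1, x.1.2, x.2⟩,
              fun x => rfl, fun x => rfl⟩ :
              {S : Finset ℕ // S.card = D + 1 ∧ r ∉ S} ≃
                ↥({S : {S : Finset ℕ // S.card = D + 1} | r ∈ S.1}ᶜ))
            (fun x => f x.1)
        rw [hE]
        unfold esym
        simp only [hf]
        linarith [H]
      -- bound the "contains r" part
      have hbound : ∀ r : ℕ,
          (∑' x : ↥{S : {S : Finset ℕ // S.card = D + 1} | r ∈ S.1}, f x.1) ≤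
            q r * esym q D := by
        intro r
        have hterm : ∀ x : ↥{S : {S : Finset ℕ // S.card = D + 1} | r ∈ S.1},
            f x.1 = q r * ∏ j ∈ x.1.1.erase r, q j := fun x =>
          (Finset.mul_prod_erase x.1.1 q x.2).symm
        rw [tsum_congr hterm, tsum_mul_left]
        have hle : (∑' x : ↥{S : {S : Finset ℕ // S.card = D + 1} | r ∈ S.1},
            ∏ j ∈ x.1.1.erase r, q j) ≤ esym q D := by
          set i : ↥{S : {S : Finset ℕ // S.card = D + 1} | r ∈ S.1} →
              {S : Finset ℕ // S.card = D} := fun x =>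
            ⟨x.1.1.erase r, by rw [Finset.card_erase_of_mem x.2, x.1.2]; rfl⟩ with hi
          have hiinj : Function.Injective i := by
            intro x y h
            have h' : x.1.1.erase r = y.1.1.erase r := congrArg Subtype.val h
            apply Subtype.ext; apply Subtype.ext
            rw [← Finset.insert_erase x.2, ← Finset.insert_erase y.2, h']
          exact ((hsumD.comp_injective hiinj).congr fun x => rfl).tsum_le_tsum_of_inj i hiinj
            (fun c _ => Finset.prod_nonneg fun j _ => hqle j)
            (fun x => le_of_eq rfl)
            hsumD
        exact mul_le_mul_of_nonneg_left hle (hqle r)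
      have hnonneg : ∀ r : ℕ,
          0 ≤ ∑' x : ↥{S : {S : Finset ℕ // S.card = D + 1} | r ∈ S.1}, f x.1 :=
        fun r => tsum_nonneg fun x => Finset.prod_nonneg fun j _ => hqle j
      have hT0 : Tendsto
          (fun r => ∑' x : ↥{S : {S : Finset ℕ // S.card = D + 1} | r ∈ S.1}, f x.1)
          atTop (nhds 0) := by
        have hub : Tendsto (fun r => q r * esym q D) atTop (nhds 0) := by
          have := hq0.mul_const (esym q D)
          rwa [zero_mul] at this
        exact tendsto_of_tendsto_of_tendsto_of_le_of_le tendsto_const_nhds hub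
          hnonneg hbound
      have hW : Tendsto (fun r => esymWithout q r (D + 1)) atTop (nhds (esym q (D + 1))) := by
        have h : Tendsto (fun r => esym q (D + 1) -
            ∑' x : ↥{S : {S : Finset ℕ // S.card = D + 1} | r ∈ S.1}, f x.1)
            atTop (nhds (esym q (D + 1) - 0)) := Tendsto.sub tendsto_const_nhds hT0
        rw [sub_zero] at h
        exact h.congr fun r => (hsplit r).symm
      have := hW.div_const (esym q (D + 1))
      rwa [div_self hGC.ne'] at this
  refine ⟨key, ?_⟩
  have hM : (0 : ℝ) < (C + 1) * esym q (C + 1) / esym q C := by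
    apply div_pos _ hGC
    positivity
  rw [Asymptotics.isEquivalent_iff_tendsto_one]
  · have : ∀ r : ℕ, (q r * (esymWithout q r C / esym q C) /
        ((C + 1) * esym q (C + 1) / esym q C)) /
        (q r / ((C + 1) * esym q (C + 1) / esym q C)) =
        esymWithout q r C / esym q C := by
      intro r
      have h1 := (hq r).ne'
      have h2 := hGC.ne'
      have h3 := hM.ne'
      field_simp
    exact key.congr fun r => (this r).symm
  · exact Eventually.of_forall fun r => div_ne_zero (hq r).ne' hM.ne'
end

section
/- The integral ∫_0^∞ log(1 + t^{-α}) dt equals π/sin(π/α) for every real α > 1. -/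
open Real MeasureTheory Set Filter

lemma beta_refl {s : ℝ} (h0 : 0 < s) (h1 : s < 1) :
    ∫ y in Set.Ioi (0:ℝ), y ^ (s-1) / (1+y) = π / Real.sin (π * s) := by
  have himg : (fun x : ℝ => x / (1-x)) '' Set.Ioo 0 1 = Set.Ioi 0 := by
    ext y
    constructor
    · rintro ⟨x, ⟨hx0, hx1⟩, rfl⟩
      have : (0:ℝ) < 1 - x := by linarith
      exact div_pos hx0 this
    · intro hy
      have hy' : (0:ℝ) < y := hy
      refine ⟨y / (1+y), ⟨by positivity, ?_⟩, ?_⟩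
      · rw [div_lt_one (by linarith)]; linarith
      · have h1y : (1:ℝ) + y ≠ 0 := by positivity
        field_simp; ring
  have hderiv : ∀ x ∈ Set.Ioo (0:ℝ) 1,
      HasDerivWithinAt (fun x : ℝ => x / (1-x)) (((1-x)^2)⁻¹) (Set.Ioo 0 1) x := by
    intro x hx
    have hx1 : (1:ℝ) - x ≠ 0 := by rw [Set.mem_Ioo] at hx; intro h; nlinarith [hx.2]
    have h := ((hasDerivAt_id x).div ((hasDerivAt_id x).const_sub 1) hx1).hasDerivWithinAt (s := Set.Ioo 0 1)
    convert h using 1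
    · rfl
    · rfl
    · rfl
    · simp only [id]; ring
  have hinj : Set.InjOn (fun x : ℝ => x / (1-x)) (Set.Ioo 0 1) := by
    intro x hx y hy hxy
    rw [Set.mem_Ioo] at hx hy
    have hx1 : (0:ℝ) < 1 - x := by linarith [hx.2]
    have hy1 : (0:ℝ) < 1 - y := by linarith [hy.2]
    field_simp at hxy
    nlinarith
  have hsub := MeasureTheory.integral_image_eq_integral_abs_deriv_smul measurableSet_Ioo
    hderiv hinj (fun y : ℝ => y ^ (s-1) / (1+y))
  rw [himg] at hsub
  rw [hsub]
  have hcong : ∀ x ∈ Set.Ioo (0:ℝ) 1,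
      |(((1-x)^2)⁻¹)| • ((x / (1-x)) ^ (s-1) / (1 + x / (1-x)))
        = x ^ (s-1) * (1-x) ^ (-s) := by
    intro x hx
    rw [Set.mem_Ioo] at hx
    have hx0 : (0:ℝ) < x := hx.1
    have hx1 : (0:ℝ) < 1 - x := by linarith [hx.2]
    have e1 : (1:ℝ) + x / (1-x) = (1-x)⁻¹ := by field_simp; ring
    have e2 : (x / (1-x)) ^ (s-1) = x ^ (s-1) * ((1-x) ^ (s-1))⁻¹ := by
      rw [Real.div_rpow hx0.le hx1.le, div_eq_mul_inv]
    rw [e1, e2, abs_of_pos (by positivity), smul_eq_mul]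
    rw [Real.rpow_neg hx1.le, Real.rpow_sub hx1, Real.rpow_one]
    field_simp
  rw [MeasureTheory.setIntegral_congr_fun measurableSet_Ioo hcong]
  -- now ∫ x in Ioo 0 1, x^(s-1) * (1-x)^(-s) = π / sin (π * s)
  have hbeta : Complex.betaIntegral s (1 - s) = ↑π / Complex.sin (π * s) := by
    have h1 : Complex.Gamma s * Complex.Gamma (1 - s)
        = Complex.Gamma (s + (1 - s)) * Complex.betaIntegral s (1 - s) :=
      Complex.Gamma_mul_Gamma_eq_betaIntegral (by simpa using h0)
        (by simp [Complex.sub_re]; simpa using h1)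
    rw [show (s:ℂ) + (1 - s) = 1 by ring, Complex.Gamma_one, one_mul] at h1
    rw [← h1, Complex.Gamma_mul_Gamma_one_sub]
  have hbeta2 : Complex.betaIntegral s (1 - s)
      = ↑(∫ x in Set.Ioo (0:ℝ) 1, x ^ (s-1) * (1-x) ^ (-s)) := by
    rw [Complex.betaIntegral, intervalIntegral.integral_of_le zero_le_one,
      MeasureTheory.integral_Ioc_eq_integral_Ioo]
    refine Eq.trans ?_ (integral_ofReal (𝕜 := ℂ)
      (f := fun x : ℝ => x ^ (s-1) * (1-x) ^ (-s)))
    refine MeasureTheory.setIntegral_congr_fun measurableSet_Ioo (fun x hx => ?_)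
    rw [Set.mem_Ioo] at hx
    show (x:ℂ) ^ ((s:ℂ) - 1) * (1 - (x:ℂ)) ^ (1 - (s:ℂ) - 1)
        = ((x ^ (s - 1) * (1 - x) ^ (-s) : ℝ) : ℂ)
    rw [Complex.ofReal_mul, Complex.ofReal_cpow hx.1.le, Complex.ofReal_cpow (by linarith [hx.2] : (0:ℝ) ≤ 1 - x)]
    push_cast
    ring_nf
  have := hbeta2.symm.trans hbeta
  rw [show ((π:ℂ)) / Complex.sin (π * s) = ((π / Real.sin (π * s) : ℝ) : ℂ) by
    push_cast [Complex.ofReal_sin]; ring_nf] at this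
  exact_mod_cast this

lemma aux_cont (α : ℝ) : ContinuousOn (fun t : ℝ => Real.log (1 + t ^ (-α))) (Set.Ioi 0) := by
  have c1 : ContinuousOn (fun t : ℝ => 1 + t ^ (-α)) (Set.Ioi 0) := by
    intro t ht
    exact (continuousAt_const.add
      (Real.continuousAt_rpow_const t (-α) (Or.inl (ne_of_gt ht)))).continuousWithinAt
  exact ContinuousOn.log c1 (fun t ht => by have h : (0:ℝ) < t := ht; positivity)

lemma aux_one_le {α t : ℝ} (hα : 0 < α) (ht : 0 < t) (ht1 : t ≤ 1) : 1 ≤ t ^ (-α) := by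
  rw [Real.rpow_neg ht.le, one_le_inv_iff₀]
  exact ⟨Real.rpow_pos_of_pos ht α, Real.rpow_le_one ht.le ht1 hα.le⟩

lemma aux_log_bound {α t : ℝ} (hα : 0 < α) (ht : 0 < t) (ht1 : t ≤ 1) :
    Real.log (1 + t ^ (-α)) ≤ Real.log 2 + 2 * α * t ^ (-(1/2) : ℝ) := by
  have h1 : (1:ℝ) ≤ t ^ (-α) := aux_one_le hα ht ht1
  have h2 : Real.log (1 + t ^ (-α)) ≤ Real.log (2 * t ^ (-α)) := by
    apply Real.log_le_log (by positivity)
    nlinarith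
  have h3 : Real.log (2 * t ^ (-α)) = Real.log 2 + (-α) * Real.log t := by
    rw [Real.log_mul (by norm_num) (by positivity), Real.log_rpow ht]
  have h4 : Real.log t⁻¹ ≤ 2 * t ^ (-(1/2) : ℝ) := by
    have := Real.log_le_rpow_div (x := t⁻¹) (by positivity) (ε := (1/2:ℝ)) (by norm_num)
    rw [Real.inv_rpow ht.le, ← Real.rpow_neg ht.le] at this
    linarith [this]
  have h5 : (-α) * Real.log t = α * Real.log t⁻¹ := by rw [Real.log_inv]; ring
  have h6 : α * Real.log t⁻¹ ≤ α * (2 * t ^ (-(1/2) : ℝ)) :=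
    mul_le_mul_of_nonneg_left h4 hα.le
  calc Real.log (1 + t ^ (-α)) ≤ Real.log 2 + (-α) * Real.log t := by rw [← h3]; exact h2
    _ ≤ Real.log 2 + 2 * α * t ^ (-(1/2):ℝ) := by rw [h5]; linarith

lemma aux_log_tail {α t : ℝ} (ht : 0 < t) : Real.log (1 + t ^ (-α)) ≤ t ^ (-α) := by
  have := Real.log_le_sub_one_of_pos (x := 1 + t ^ (-α)) (by positivity)
  linarith

lemma aux_rpow_int : IntegrableOn (fun t : ℝ => t ^ (-(1/2) : ℝ)) (Set.Ioc 0 1) := by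
  have := intervalIntegral.intervalIntegrable_rpow' (a := 0) (b := 1)
    (r := (-(1/2) : ℝ)) (by norm_num)
  rwa [intervalIntegrable_iff_integrableOn_Ioc_of_le zero_le_one] at this

lemma int_log (α : ℝ) (hα : 1 < α) :
    IntegrableOn (fun t : ℝ => Real.log (1 + t ^ (-α))) (Set.Ioi 0) := by
  have hα0 : (0:ℝ) < α := lt_trans one_pos hα
  rw [← Set.Ioc_union_Ioi_eq_Ioi (zero_le_one (α := ℝ))]
  apply MeasureTheory.IntegrableOn.union
  · apply MeasureTheory.Integrable.mono'
      (g := fun t : ℝ => Real.log 2 + 2 * α * t ^ (-(1/2) : ℝ))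
    · exact (integrableOn_const measure_Ioc_lt_top.ne).add (aux_rpow_int.const_mul _)
    · exact ((aux_cont α).mono Set.Ioc_subset_Ioi_self).aestronglyMeasurable measurableSet_Ioc
    · refine (MeasureTheory.ae_restrict_iff' measurableSet_Ioc).2 (.of_forall fun t ht => ?_)
      rw [Set.mem_Ioc] at ht
      rw [Real.norm_eq_abs, abs_of_nonneg (Real.log_nonneg (by nlinarith [aux_one_le hα0 ht.1 ht.2]))]
      exact aux_log_bound hα0 ht.1 ht.2
  · apply MeasureTheory.Integrable.mono' (g := fun t : ℝ => t ^ (-α))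
    · exact integrableOn_Ioi_rpow_of_lt (by linarith) one_pos
    · exact ((aux_cont α).mono (Set.Ioi_subset_Ioi zero_le_one)).aestronglyMeasurable
        measurableSet_Ioi
    · refine (MeasureTheory.ae_restrict_iff' measurableSet_Ioi).2 (.of_forall fun t ht => ?_)
      rw [Set.mem_Ioi] at ht
      have ht0 : (0:ℝ) < t := lt_trans one_pos ht
      rw [Real.norm_eq_abs, abs_of_nonneg (Real.log_nonneg (by nlinarith [Real.rpow_pos_of_pos ht0 (-α)]))]
      exact aux_log_tail ht0

lemma int_uv (α : ℝ) (hα : 1 < α) :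
    IntegrableOn (fun t : ℝ => (-α * t ^ (-α - 1) / (1 + t ^ (-α))) * t) (Set.Ioi 0) := by
  have hα0 : (0:ℝ) < α := lt_trans one_pos hα
  have hcont : ContinuousOn (fun t : ℝ => (-α * t ^ (-α - 1) / (1 + t ^ (-α))) * t)
      (Set.Ioi 0) := by
    intro t ht
    have h1 : (0:ℝ) < t := ht
    have c1 : ContinuousAt (fun t : ℝ => t ^ (-α-1)) t :=
      Real.continuousAt_rpow_const _ _ (Or.inl h1.ne')
    have c2 : ContinuousAt (fun t : ℝ => 1 + t ^ (-α)) t :=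
      continuousAt_const.add (Real.continuousAt_rpow_const _ _ (Or.inl h1.ne'))
    have c3 : ContinuousAt (fun t : ℝ => (-α * t ^ (-α - 1) / (1 + t ^ (-α))) * t) t :=
      ((c1.const_mul (-α)).div c2 (by positivity)).mul continuousAt_id
    exact c3.continuousWithinAt
  have key : ∀ t : ℝ, 0 < t →
      ‖(-α * t ^ (-α - 1) / (1 + t ^ (-α))) * t‖ ≤ α * min 1 (t ^ (-α)) := by
    intro t ht
    have hp : (0:ℝ) < t ^ (-α) := Real.rpow_pos_of_pos ht _
    have hp1 : (0:ℝ) < t ^ (-α-1) := Real.rpow_pos_of_pos ht _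
    have hmul : t ^ (-α-1) * t = t ^ (-α) := by
      nth_rw 2 [show t = t ^ (1:ℝ) by rw [Real.rpow_one]]
      rw [← Real.rpow_add ht]; ring_nf
    rw [Real.norm_eq_abs, abs_mul, abs_div, abs_mul, abs_of_pos hp1,
      abs_of_pos (by positivity : (0:ℝ) < 1 + t ^ (-α)), abs_of_pos ht, abs_neg,
      abs_of_pos hα0, div_mul_eq_mul_div, mul_assoc, hmul, mul_div_assoc]
    refine mul_le_mul_of_nonneg_left (le_min ?_ ?_) hα0.le
    · rw [div_le_iff₀ (by positivity)]
      nlinarith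
    · rw [div_le_iff₀ (by positivity)]
      nlinarith
  rw [← Set.Ioc_union_Ioi_eq_Ioi (zero_le_one (α := ℝ))]
  apply MeasureTheory.IntegrableOn.union
  · apply MeasureTheory.Integrable.mono' (g := fun _ : ℝ => α)
    · exact integrableOn_const measure_Ioc_lt_top.ne
    · exact (hcont.mono Set.Ioc_subset_Ioi_self).aestronglyMeasurable measurableSet_Ioc
    · refine (MeasureTheory.ae_restrict_iff' measurableSet_Ioc).2 (.of_forall fun t ht => ?_)
      rw [Set.mem_Ioc] at ht
      refine (key t ht.1).trans ?_
      have : min 1 (t ^ (-α)) ≤ 1 := min_le_left _ _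
      nlinarith
  · apply MeasureTheory.Integrable.mono' (g := fun t : ℝ => α * t ^ (-α))
    · exact (integrableOn_Ioi_rpow_of_lt (by linarith) one_pos).const_mul α
    · exact (hcont.mono (Set.Ioi_subset_Ioi zero_le_one)).aestronglyMeasurable measurableSet_Ioi
    · refine (MeasureTheory.ae_restrict_iff' measurableSet_Ioi).2 (.of_forall fun t ht => ?_)
      rw [Set.mem_Ioi] at ht
      have ht0 : (0:ℝ) < t := lt_trans one_pos ht
      refine (key t ht0).trans ?_
      have : min 1 (t ^ (-α)) ≤ t ^ (-α) := min_le_right _ _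
      nlinarith

lemma tend_zero (α : ℝ) (hα : 1 < α) :
    Tendsto (fun x : ℝ => Real.log (1 + x ^ (-α)) * x) (nhdsWithin 0 (Set.Ioi 0)) (nhds 0) := by
  have hα0 : (0:ℝ) < α := lt_trans one_pos hα
  have hup : Tendsto (fun x : ℝ => Real.log 2 * x + 2 * α * x ^ ((1:ℝ)/2))
      (nhdsWithin 0 (Set.Ioi 0)) (nhds 0) := by
    have h1 : Tendsto (fun x : ℝ => Real.log 2 * x) (nhds 0) (nhds 0) := by
      have hc : Continuous (fun x : ℝ => Real.log 2 * x) := continuous_const.mul continuous_id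
      simpa using hc.tendsto 0
    have h2 : Tendsto (fun x : ℝ => 2 * α * x ^ ((1:ℝ)/2)) (nhds 0) (nhds 0) := by
      have := (Real.continuousAt_rpow_const 0 ((1:ℝ)/2) (Or.inr (by norm_num))).const_smul (2*α)
      simpa [ContinuousAt, Pi.smul_def, smul_eq_mul, Real.zero_rpow (by norm_num : ((1:ℝ)/2) ≠ 0)] using this
    simpa using (h1.add h2).mono_left nhdsWithin_le_nhds
  refine tendsto_of_tendsto_of_tendsto_of_le_of_le' tendsto_const_nhds hup ?_ ?_
  · filter_upwards [self_mem_nhdsWithin] with x hx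
    have hx0 : (0:ℝ) < x := hx
    have h1 : (1:ℝ) ≤ 1 + x ^ (-α) := by nlinarith [Real.rpow_pos_of_pos hx0 (-α)]
    exact mul_nonneg (Real.log_nonneg h1) hx0.le
  · filter_upwards [Ioo_mem_nhdsGT_of_mem (by constructor <;> norm_num : (0:ℝ) ∈ Set.Ico 0 1)]
      with x hx
    rw [Set.mem_Ioo] at hx
    have hb := aux_log_bound hα0 hx.1 hx.2.le
    have hxx : x ^ (-(1/2):ℝ) * x = x ^ ((1:ℝ)/2) := by
      nth_rw 2 [show x = x ^ (1:ℝ) by rw [Real.rpow_one]]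
      rw [← Real.rpow_add hx.1]; norm_num
    calc Real.log (1 + x ^ (-α)) * x ≤ (Real.log 2 + 2 * α * x ^ (-(1/2):ℝ)) * x :=
          mul_le_mul_of_nonneg_right hb hx.1.le
      _ = Real.log 2 * x + 2 * α * (x ^ (-(1/2):ℝ) * x) := by ring
      _ = Real.log 2 * x + 2 * α * x ^ ((1:ℝ)/2) := by rw [hxx]

lemma tend_top (α : ℝ) (hα : 1 < α) :
    Tendsto (fun x : ℝ => Real.log (1 + x ^ (-α)) * x) atTop (nhds 0) := by
  have hup : Tendsto (fun x : ℝ => x ^ (1 - α)) atTop (nhds 0) := by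
    have := tendsto_rpow_neg_atTop (by linarith : (0:ℝ) < α - 1)
    simpa [show -(α-1) = 1-α by ring] using this
  refine tendsto_of_tendsto_of_tendsto_of_le_of_le' tendsto_const_nhds hup ?_ ?_
  · filter_upwards [eventually_gt_atTop 0] with x hx
    have h1 : (1:ℝ) ≤ 1 + x ^ (-α) := by nlinarith [Real.rpow_pos_of_pos hx (-α)]
    exact mul_nonneg (Real.log_nonneg h1) hx.le
  · filter_upwards [eventually_gt_atTop 0] with x hx
    have hxx : x ^ (-α) * x = x ^ (1 - α) := by
      nth_rw 2 [show x = x ^ (1:ℝ) by rw [Real.rpow_one]]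
      rw [← Real.rpow_add hx]; ring_nf
    calc Real.log (1 + x ^ (-α)) * x ≤ x ^ (-α) * x :=
          mul_le_mul_of_nonneg_right (aux_log_tail hx) hx.le
      _ = x ^ (1 - α) := hxx

/-- `∫_0^∞ log(1 + t^{-α}) dt = π/sin(π/α)` for every real `α > 1`. -/
theorem stmt10 (α : ℝ) (hα : 1 < α) :
    ∫ t in Set.Ioi (0 : ℝ), Real.log (1 + t ^ (-α)) = π / Real.sin (π / α) := by
  have hα0 : (0:ℝ) < α := lt_trans one_pos hα
  set u : ℝ → ℝ := fun t => Real.log (1 + t ^ (-α)) with hu_def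
  set u' : ℝ → ℝ := fun t => -α * t ^ (-α - 1) / (1 + t ^ (-α)) with hu'_def
  have hu : ∀ x ∈ Set.Ioi (0:ℝ), HasDerivAt u (u' x) x := by
    intro x hx
    have hx0 : (0:ℝ) < x := hx
    have h1 : HasDerivAt (fun t : ℝ => 1 + t ^ (-α)) (-α * x ^ (-α - 1)) x :=
      (Real.hasDerivAt_rpow_const (Or.inl hx0.ne')).const_add 1
    have h2 : (1:ℝ) + x ^ (-α) ≠ 0 := by positivity
    exact h1.log h2
  have hv : ∀ x ∈ Set.Ioi (0:ℝ), HasDerivAt (fun t : ℝ => t) (1:ℝ) x := fun x _ => hasDerivAt_id x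
  have hibp := MeasureTheory.integral_Ioi_mul_deriv_eq_deriv_mul hu hv
    (by simpa [Pi.mul_def] using int_log α hα)
    (by simpa [Pi.mul_def, hu'_def, neg_mul] using int_uv α hα)
    (by simpa [Pi.mul_def] using tend_zero α hα)
    (by simpa [Pi.mul_def] using tend_top α hα)
  have hstep1 : ∫ t in Set.Ioi (0:ℝ), Real.log (1 + t ^ (-α))
      = - ∫ t in Set.Ioi (0:ℝ), u' t * t := by
    simpa using hibp
  have hsub := MeasureTheory.integral_comp_rpow_Ioi
    (fun y : ℝ => y ^ (-α⁻¹) / (1 + y)) (p := -α) (by simpa using hα0.ne')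
  have hstep2 : (- ∫ t in Set.Ioi (0:ℝ), u' t * t)
      = ∫ x in Set.Ioi (0:ℝ), (|(-α)| * x ^ (-α - 1)) • ((x ^ (-α)) ^ (-α⁻¹) / (1 + x ^ (-α))) := by
    rw [← MeasureTheory.integral_neg]
    refine MeasureTheory.setIntegral_congr_fun measurableSet_Ioi (fun x hx => ?_)
    have hx0 : (0:ℝ) < x := hx
    have h3 : (x ^ (-α)) ^ (-α⁻¹) = x := by
      rw [← Real.rpow_mul hx0.le, show -α * -α⁻¹ = 1 by field_simp, Real.rpow_one]
    rw [h3, abs_neg, abs_of_pos hα0, smul_eq_mul]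
    have h4 : (1:ℝ) + x ^ (-α) ≠ 0 := by positivity
    simp only [hu'_def]; field_simp
  have hs0 : (0:ℝ) < 1 - α⁻¹ := by
    have : α⁻¹ < 1 := by rw [inv_lt_one_iff₀]; right; exact hα
    linarith
  have hs1 : 1 - α⁻¹ < 1 := by
    have : (0:ℝ) < α⁻¹ := by positivity
    linarith
  have hbeta := beta_refl hs0 hs1
  rw [show (1 - α⁻¹) - 1 = -α⁻¹ by ring] at hbeta
  rw [hstep1, hstep2, hsub, hbeta, show π * (1 - α⁻¹) = π - π / α by field_simp,
    Real.sin_pi_sub]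
end

section
/- For a Zipf popularity distribution q_r = A/r^α with α > 1 and A = 1/ζ(α), the function log F(z) = Σ_{r≥1} log(1 + A z/r^α) satisfies, as real z → +∞, log F(z) = α(ρ_α A z)^{1/α} + O(log z), where ρ_α = ((π/α)/sin(π/α))^α. -/
open Real Filter Asymptotics Set MeasureTheory intervalIntegral

lemma contOn_inv_one_add_rpow (α : ℝ) : ContinuousOn (fun t : ℝ => (1 + t ^ α)⁻¹) (Ioi 0) := by
  apply ContinuousOn.inv₀
  · exact continuousOn_const.add (continuousOn_id.rpow_const (fun x hx => Or.inl (ne_of_gt hx)))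
  · intro x hx
    have := Real.rpow_nonneg (le_of_lt (mem_Ioi.mp hx)) α
    positivity

lemma aux_int1 {α : ℝ} (hα : 1 < α) :
    IntegrableOn (fun t : ℝ => (1 + t ^ α)⁻¹) (Ioi 0) := by
  have h1 : IntegrableOn (fun t : ℝ => (1 + t ^ α)⁻¹) (Ioc 0 1) := by
    have hb : IntegrableOn (fun _ : ℝ => (1:ℝ)) (Ioc 0 1) :=
      integrableOn_const measure_Ioc_lt_top.ne
    refine Integrable.mono' hb ?_ ?_
    · exact (((contOn_inv_one_add_rpow α).mono Ioc_subset_Ioi_self).aemeasurable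
        measurableSet_Ioc).aestronglyMeasurable
    · filter_upwards [ae_restrict_mem measurableSet_Ioc] with t ht
      have hr := Real.rpow_nonneg (le_of_lt ht.1) α
      have h0 : (0:ℝ) < 1 + t ^ α := by positivity
      rw [Real.norm_eq_abs, abs_of_pos (inv_pos.2 h0), inv_le_one_iff₀]
      right; linarith
  have h2 : IntegrableOn (fun t : ℝ => (1 + t ^ α)⁻¹) (Ioi 1) := by
    refine Integrable.mono' (integrableOn_Ioi_rpow_of_lt (by linarith : -α < -1) one_pos) ?_ ?_
    · exact (((contOn_inv_one_add_rpow α).mono (Ioi_subset_Ioi zero_le_one)).aemeasurable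
        measurableSet_Ioi).aestronglyMeasurable
    · filter_upwards [ae_restrict_mem measurableSet_Ioi] with t ht
      have ht0 : (0:ℝ) < t := lt_trans one_pos ht
      have hr := Real.rpow_pos_of_pos ht0 α
      have h0 : (0:ℝ) < 1 + t ^ α := by positivity
      rw [Real.norm_eq_abs, abs_of_pos (inv_pos.2 h0), Real.rpow_neg ht0.le]
      exact inv_anti₀ hr (by linarith)
  rw [← Ioc_union_Ioi_eq_Ioi (zero_le_one : (0:ℝ) ≤ 1)]
  exact h1.union h2

lemma aux_M1 {β : ℝ} (h0 : 0 < β) (h1 : β < 1) :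
    ∫ x in (0:ℝ)..1, x ^ (β - 1) * (1 - x) ^ (-β) = π / Real.sin (π * β) := by
  have hbeta : Complex.betaIntegral β (1 - β)
      = ((∫ x in (0:ℝ)..1, x ^ (β - 1) * (1 - x) ^ (-β)) : ℝ) := by
    rw [Complex.betaIntegral, ← intervalIntegral.integral_ofReal]
    apply intervalIntegral.integral_congr
    intro x hx
    rw [Set.uIcc_of_le zero_le_one] at hx
    have hx1 : (0:ℝ) ≤ 1 - x := by linarith [hx.2]
    push_cast
    rw [Complex.ofReal_cpow hx.1, Complex.ofReal_cpow hx1]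
    push_cast
    ring_nf
  have hgb : Complex.Gamma β * Complex.Gamma (1 - β) = Complex.betaIntegral β (1 - β) := by
    have h := Complex.Gamma_mul_Gamma_eq_betaIntegral
      (s := (β:ℂ)) (t := ((1 - β : ℝ) : ℂ)) (by simpa using h0) (by simp; linarith)
    rw [show ((β:ℂ)) + ((1 - β : ℝ):ℂ) = 1 by push_cast; ring, Complex.Gamma_one, one_mul] at h
    simpa using h
  have hre : Real.Gamma β * Real.Gamma (1 - β) = π / Real.sin (π * β) :=
    Real.Gamma_mul_Gamma_one_sub β
  have : ((Real.Gamma β * Real.Gamma (1 - β) : ℝ) : ℂ)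
      = ((∫ x in (0:ℝ)..1, x ^ (β - 1) * (1 - x) ^ (-β)) : ℝ) := by
    push_cast
    rw [← Complex.Gamma_ofReal, ← Complex.Gamma_ofReal]
    push_cast
    rw [hgb, hbeta]
  have := Complex.ofReal_inj.mp this
  rw [← this, hre]

lemma aux_M {β : ℝ} (h0 : 0 < β) (h1 : β < 1) :
    ∫ u in Ioi (0:ℝ), u ^ (β - 1) * (1 + u)⁻¹ = π / Real.sin (π * β) := by
  have hder : ∀ x ∈ Ioo (0:ℝ) 1,
      HasDerivWithinAt (fun x : ℝ => x / (1 - x)) (((1 - x) ^ 2)⁻¹) (Ioo 0 1) x := by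
    intro x hx
    have hne : (1 : ℝ) - x ≠ 0 := sub_ne_zero.mpr (ne_of_lt hx.2).symm
    have h := (hasDerivAt_id x).div ((hasDerivAt_id x).const_sub 1) hne
    simp only [id_eq] at h
    have heq : ((1 - x) ^ 2)⁻¹ = (1 * (1 - x) - x * -1) / (1 - x) ^ 2 := by
      field_simp
      ring
    exact (heq ▸ h).hasDerivWithinAt
  have hInj : InjOn (fun x : ℝ => x / (1 - x)) (Ioo 0 1) := by
    intro x hx y hy h
    have hxne : (1:ℝ) - x ≠ 0 := by have := hx.2; intro hc; linarith [sub_eq_zero.mp hc]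
    have hyne : (1:ℝ) - y ≠ 0 := by have := hy.2; intro hc; linarith [sub_eq_zero.mp hc]
    field_simp at h
    linarith
  have hImg : (fun x : ℝ => x / (1 - x)) '' Ioo 0 1 = Ioi 0 := by
    ext u
    constructor
    · rintro ⟨x, hx, rfl⟩
      exact div_pos hx.1 (by linarith [hx.2])
    · intro hu
      have hu0 : (0:ℝ) < u := hu
      refine ⟨u / (1 + u), ⟨div_pos hu0 (by linarith), ?_⟩, ?_⟩
      · rw [div_lt_one (by linarith)]; linarith
      · have : (1:ℝ) + u ≠ 0 := by positivity
        field_simp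
        ring
  have key := MeasureTheory.integral_image_eq_integral_abs_deriv_smul measurableSet_Ioo hder hInj
    (fun u : ℝ => u ^ (β - 1) * (1 + u)⁻¹)
  rw [hImg] at key
  rw [key]
  have congrstep : ∫ x in Ioo (0:ℝ) 1,
      |((1 - x) ^ 2)⁻¹| • ((x / (1 - x)) ^ (β - 1) * (1 + x / (1 - x))⁻¹)
      = ∫ x in Ioo (0:ℝ) 1, x ^ (β - 1) * (1 - x) ^ (-β) := by
    apply setIntegral_congr_fun measurableSet_Ioo
    intro x hx
    have hx0 : (0:ℝ) < x := hx.1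
    have hy : (0:ℝ) < 1 - x := by linarith [hx.2]
    have h1x : 1 + x / (1 - x) = (1 - x)⁻¹ := by field_simp; ring
    have hdiv : (x / (1 - x)) ^ (β - 1) = x ^ (β - 1) * ((1 - x) ^ (β - 1))⁻¹ := by
      rw [Real.div_rpow hx0.le hy.le, div_eq_mul_inv]
    have habs : |((1 - x) ^ 2)⁻¹| = ((1 - x) ^ 2)⁻¹ := abs_of_pos (by positivity)
    simp only [smul_eq_mul]
    rw [habs, h1x, hdiv, inv_inv]
    rw [show ((1 - x) ^ 2 : ℝ) = (1 - x) ^ (2:ℝ) by rw [← Real.rpow_natCast (1-x) 2]; norm_num]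
    rw [← Real.rpow_neg hy.le, ← Real.rpow_neg hy.le]
    rw [show (x ^ (β - 1) * ((1 - x) ^ (-(β - 1)) : ℝ)) * (1 - x)
        = x ^ (β - 1) * ((1 - x) ^ (-(β - 1)) * (1 - x) ^ (1:ℝ)) by
      rw [Real.rpow_one]; ring]
    rw [← Real.rpow_add hy, mul_comm ((1 - x) ^ (-2:ℝ)) _, mul_assoc, ← Real.rpow_add hy]
    congr 1
    ring
  rw [congrstep, ← MeasureTheory.integral_Ioc_eq_integral_Ioo,
    ← intervalIntegral.integral_of_le zero_le_one]
  exact aux_M1 h0 h1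

lemma aux_K {α : ℝ} (hα : 1 < α) :
    ∫ t in Ioi (0:ℝ), (1 + t ^ α)⁻¹ = (π / α) / Real.sin (π / α) := by
  have hα0 : (0:ℝ) < α := by linarith
  have key := MeasureTheory.integral_comp_rpow_Ioi_of_pos
    (g := fun u : ℝ => α⁻¹ * (u ^ (1/α - 1) * (1 + u)⁻¹)) hα0
  have congrstep : ∫ x in Ioi (0:ℝ),
      (α * x ^ (α - 1)) • (α⁻¹ * ((x ^ α) ^ (1/α - 1) * (1 + x ^ α)⁻¹))
      = ∫ x in Ioi (0:ℝ), (1 + x ^ α)⁻¹ := by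
    apply setIntegral_congr_fun measurableSet_Ioi
    intro x hx
    have hx0 : (0:ℝ) < x := hx
    have h1 : (x ^ α) ^ (1/α - 1) = x ^ (1 - α) := by
      rw [← Real.rpow_mul hx0.le]
      congr 1
      field_simp
    dsimp only
    rw [h1, smul_eq_mul]
    rw [show α * x ^ (α - 1) * (α⁻¹ * (x ^ (1 - α) * (1 + x ^ α)⁻¹))
        = (α * α⁻¹) * (x ^ (α - 1) * x ^ (1 - α)) * (1 + x ^ α)⁻¹ by ring]
    rw [← Real.rpow_add hx0, mul_inv_cancel₀ (ne_of_gt hα0)]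
    norm_num
  rw [← congrstep, key]
  rw [MeasureTheory.integral_const_mul, aux_M (β := 1/α)
    (by positivity) (by rw [div_lt_one hα0]; linarith)]
  rw [show π * (1/α) = π / α by ring]
  field_simp

lemma aux_shift {α s : ℝ} (hα : 1 < α) (hs : 0 < s) :
    IntegrableOn (fun t : ℝ => (s + t ^ α)⁻¹) (Ioi 0) ∧
    ∫ t in Ioi (0:ℝ), (s + t ^ α)⁻¹
      = s ^ (1/α - 1) * ∫ t in Ioi (0:ℝ), (1 + t ^ α)⁻¹ := by
  have hα0 : (0:ℝ) < α := by linarith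
  have hb : (0:ℝ) < s ^ (1/α) := Real.rpow_pos_of_pos hs _
  have hcomp : ∀ x ∈ Ioi (0:ℝ), (s + (s ^ (1/α) * x) ^ α)⁻¹ = s⁻¹ * (1 + x ^ α)⁻¹ := by
    intro x hx
    have hx0 : (0:ℝ) < x := hx
    have h1 : (s ^ (1/α) * x) ^ α = s * x ^ α := by
      rw [Real.mul_rpow (le_of_lt hb) hx0.le, ← Real.rpow_mul hs.le]
      congr 2
      field_simp
      simp
    rw [h1, ← mul_inv]
    congr 1
    ring
  constructor
  · have := (MeasureTheory.integrableOn_Ioi_comp_mul_left_iff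
      (fun t : ℝ => (s + t ^ α)⁻¹) 0 hb)
    rw [mul_zero] at this
    rw [← this]
    apply IntegrableOn.congr_fun _ (fun x hx => (hcomp x hx).symm) measurableSet_Ioi
    exact (aux_int1 hα).const_mul _
  · have key := MeasureTheory.integral_comp_mul_left_Ioi
      (fun t : ℝ => (s + t ^ α)⁻¹) 0 hb
    rw [mul_zero] at key
    rw [setIntegral_congr_fun measurableSet_Ioi hcomp] at key
    rw [MeasureTheory.integral_const_mul] at key
    have := key.symm
    rw [smul_eq_mul] at this
    have this2 : (s ^ (1/α))⁻¹ * ∫ t in Ioi (0:ℝ), (s + t ^ α)⁻¹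
        = s⁻¹ * ∫ t in Ioi (0:ℝ), (1 + t ^ α)⁻¹ := by
      simpa using this
    have h2 : ∫ t in Ioi (0:ℝ), (s + t ^ α)⁻¹
        = s ^ (1/α) * (s⁻¹ * ∫ t in Ioi (0:ℝ), (1 + t ^ α)⁻¹) := by
      rw [← this2, ← mul_assoc, mul_inv_cancel₀ (ne_of_gt hb), one_mul]
    rw [h2, ← mul_assoc]
    congr 1
    rw [← Real.rpow_neg_one s, ← Real.rpow_add hs, sub_eq_add_neg]

lemma aux_cont_f {α c : ℝ} (hc : 0 < c) :
    ContinuousOn (fun t : ℝ => Real.log (1 + c / t ^ α)) (Ioi 0) := by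
  apply ContinuousOn.log
  · apply ContinuousOn.add continuousOn_const
    apply ContinuousOn.div continuousOn_const
      (continuousOn_id.rpow_const (fun x hx => Or.inl (ne_of_gt hx)))
    intro x hx
    exact ne_of_gt (Real.rpow_pos_of_pos hx α)
  · intro x hx
    have h1 : 0 < c / x ^ α := div_pos hc (Real.rpow_pos_of_pos hx α)
    positivity

lemma aux_main {α c : ℝ} (hα : 1 < α) (hc : 0 < c) :
    IntegrableOn (fun t : ℝ => Real.log (1 + c / t ^ α)) (Ioi 0) ∧
    ∫ t in Ioi (0:ℝ), Real.log (1 + c / t ^ α)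
      = (π / Real.sin (π / α)) * c ^ (1/α) := by
  have hα0 : (0:ℝ) < α := by linarith
  have hβ0 : (0:ℝ) < 1/α := by positivity
  have hβ1 : 1/α < 1 := by rw [div_lt_one hα0]; linarith
  set K := ∫ t in Ioi (0:ℝ), (1 + t ^ α)⁻¹ with hKdef
  have hsin : 0 < Real.sin (π / α) := by
    apply Real.sin_pos_of_pos_of_lt_pi
    · positivity
    · rw [div_lt_iff₀ hα0]
      nlinarith [Real.pi_pos]
  have hKpos : 0 < K := by
    rw [hKdef, aux_K hα]
    positivity
  -- pointwise: log (1 + c/t^α) = ∫ s in Ioo 0 c, (s + t^α)⁻¹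
  have hlog : ∀ t : ℝ, 0 < t →
      ∫ s in Ioo (0:ℝ) c, (s + t ^ α)⁻¹ = Real.log (1 + c / t ^ α) := by
    intro t ht
    have hta : (0:ℝ) < t ^ α := Real.rpow_pos_of_pos ht α
    rw [← MeasureTheory.integral_Ioc_eq_integral_Ioo,
      ← intervalIntegral.integral_of_le hc.le]
    have hshift := intervalIntegral.integral_comp_add_right (a := (0:ℝ)) (b := c)
      (fun x : ℝ => x⁻¹) (t ^ α)
    rw [show (fun s : ℝ => (s + t ^ α)⁻¹) = fun s : ℝ => (fun x : ℝ => x⁻¹) (s + t ^ α)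
      from rfl, hshift, zero_add]
    rw [integral_inv]
    · congr 1
      field_simp
      ring
    · rw [Set.uIcc_of_le (by linarith)]
      intro h0
      exact absurd h0.1 (not_le.mpr hta)
  -- integrability of inner slice
  have hslice : ∀ t : ℝ, 0 < t →
      IntegrableOn (fun s : ℝ => (s + t ^ α)⁻¹) (Ioo 0 c) := by
    intro t ht
    have hta : (0:ℝ) < t ^ α := Real.rpow_pos_of_pos ht α
    have hcont : ContinuousOn (fun s : ℝ => (s + t ^ α)⁻¹) (Icc 0 c) := by
      apply ContinuousOn.inv₀ (by fun_prop)
      intro s hs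
      have := hs.1
      positivity
    exact (hcont.integrableOn_Icc).mono_set Ioo_subset_Icc_self
  -- measurability of the kernel
  have hmeas2 : Measurable (fun p : ℝ × ℝ => ENNReal.ofReal ((p.2 + p.1 ^ α)⁻¹)) := by
    fun_prop
  -- the lintegral computation
  set B := ∫⁻ t in Ioi (0:ℝ), ENNReal.ofReal (Real.log (1 + c / t ^ α)) with hBdef
  have step1 : B = ∫⁻ t in Ioi (0:ℝ),
      ∫⁻ s in Ioo (0:ℝ) c, ENNReal.ofReal ((s + t ^ α)⁻¹) := by
    rw [hBdef]
    apply setLIntegral_congr_fun measurableSet_Ioi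
    intro t ht
    dsimp only
    rw [← hlog t ht]
    rw [MeasureTheory.ofReal_integral_eq_lintegral_ofReal (hslice t ht)]
    filter_upwards [ae_restrict_mem measurableSet_Ioo] with s hs
    have hta : (0:ℝ) < t ^ α := Real.rpow_pos_of_pos ht α
    have hs0 := hs.1
    positivity
  have step2 : B = ∫⁻ s in Ioo (0:ℝ) c,
      ∫⁻ t in Ioi (0:ℝ), ENNReal.ofReal ((s + t ^ α)⁻¹) := by
    rw [step1]
    exact lintegral_lintegral_swap hmeas2.aemeasurable
  have step3 : B = ∫⁻ s in Ioo (0:ℝ) c, ENNReal.ofReal (s ^ (1/α - 1) * K) := by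
    rw [step2]
    apply setLIntegral_congr_fun measurableSet_Ioo
    intro s hs
    dsimp only
    rw [← (aux_shift hα hs.1).2]
    rw [← MeasureTheory.ofReal_integral_eq_lintegral_ofReal (aux_shift hα hs.1).1]
    filter_upwards [ae_restrict_mem measurableSet_Ioi] with t ht
    have hta : (0:ℝ) < t ^ α := Real.rpow_pos_of_pos ht α
    have hs0 := hs.1
    positivity
  have hintr : IntegrableOn (fun s : ℝ => s ^ (1/α - 1) * K) (Ioo 0 c) := by
    have h1 : IntervalIntegrable (fun s : ℝ => s ^ (1/α - 1)) volume 0 c :=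
      intervalIntegrable_rpow' (by linarith)
    rw [intervalIntegrable_iff_integrableOn_Ioo_of_le hc.le] at h1
    exact h1.mul_const K
  have hval : ∫ s in Ioo (0:ℝ) c, s ^ (1/α - 1) * K = (α * c ^ (1/α)) * K := by
    rw [MeasureTheory.integral_mul_const]
    congr 1
    rw [← MeasureTheory.integral_Ioc_eq_integral_Ioo, ← intervalIntegral.integral_of_le hc.le]
    rw [integral_rpow (Or.inl (by linarith))]
    rw [sub_add_cancel, Real.zero_rpow (by positivity : (1/α : ℝ) ≠ 0)]
    rw [sub_zero, div_eq_mul_inv, one_div, inv_inv, mul_comm]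
  have step4 : B = ENNReal.ofReal ((α * c ^ (1/α)) * K) := by
    rw [step3, ← MeasureTheory.ofReal_integral_eq_lintegral_ofReal hintr, hval]
    filter_upwards [ae_restrict_mem measurableSet_Ioo] with s hs
    have hs0 := hs.1
    have := Real.rpow_nonneg hs0.le (1/α - 1)
    positivity
  -- nonnegativity and measurability of f
  have hnonneg : ∀ t : ℝ, t ∈ Ioi (0:ℝ) → 0 ≤ Real.log (1 + c / t ^ α) := by
    intro t ht
    apply Real.log_nonneg
    have : 0 < c / t ^ α := div_pos hc (Real.rpow_pos_of_pos ht α)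
    linarith
  have hmf : AEStronglyMeasurable (fun t : ℝ => Real.log (1 + c / t ^ α))
      (volume.restrict (Ioi 0)) :=
    ((aux_cont_f hc).aemeasurable measurableSet_Ioi).aestronglyMeasurable
  have hnonneg' : 0 ≤ᵐ[volume.restrict (Ioi (0:ℝ))]
      fun t : ℝ => Real.log (1 + c / t ^ α) := by
    filter_upwards [ae_restrict_mem measurableSet_Ioi] with t ht
    exact hnonneg t ht
  have hint : IntegrableOn (fun t : ℝ => Real.log (1 + c / t ^ α)) (Ioi 0) := by
    refine ⟨hmf, ?_⟩
    rw [hasFiniteIntegral_iff_ofReal hnonneg']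
    rw [← hBdef, step4]
    exact ENNReal.ofReal_lt_top
  refine ⟨hint, ?_⟩
  rw [MeasureTheory.integral_eq_lintegral_of_nonneg_ae hnonneg' hmf]
  rw [← hBdef, step4, ENNReal.toReal_ofReal (by positivity)]
  rw [hKdef, aux_K hα]
  field_simp

lemma aux_union (k : ℝ) (hk : 0 ≤ k) :
    ⋃ n : ℕ, Ioc ((n:ℝ) + k) ((n:ℝ) + k + 1) = Ioi k := by
  ext t
  simp only [mem_iUnion, mem_Ioc, mem_Ioi]
  constructor
  · rintro ⟨n, h1, h2⟩
    have : (0:ℝ) ≤ n := Nat.cast_nonneg n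
    linarith
  · intro ht
    have hx : 0 < t - k := by linarith
    have h1 : (⌈t - k⌉₊ : ℝ) < (t - k) + 1 := Nat.ceil_lt_add_one hx.le
    have h2 : t - k ≤ (⌈t - k⌉₊ : ℝ) := Nat.le_ceil _
    have hm1 : 1 ≤ ⌈t - k⌉₊ := Nat.one_le_ceil_iff.mpr hx
    refine ⟨⌈t - k⌉₊ - 1, ?_, ?_⟩ <;>
      rw [Nat.cast_sub hm1] <;> push_cast <;> linarith

lemma aux_disj (k : ℝ) :
    Pairwise (Function.onFun Disjoint fun n : ℕ => Ioc ((n:ℝ) + k) ((n:ℝ) + k + 1)) := by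
  intro m n hmn
  simp only [Function.onFun]
  rw [Set.Ioc_disjoint_Ioc]
  rcases hmn.lt_or_gt with h | h
  · have : (m:ℝ) + 1 ≤ n := by exact_mod_cast h
    exact le_trans (min_le_left _ _) (le_max_of_le_right (by linarith))
  · have : (n:ℝ) + 1 ≤ m := by exact_mod_cast h
    exact le_trans (min_le_right _ _) (le_max_of_le_left (by linarith))

lemma aux_summable0 {α : ℝ} (hα : 1 < α) :
    Summable (fun n : ℕ => (((n:ℝ) + 1) ^ α)⁻¹) := by
  have h := Real.summable_one_div_nat_rpow.mpr hα
  have h2 := (summable_nat_add_iff 1).mpr h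
  simp only [one_div] at h2
  convert h2 using 2 with n
  push_cast
  · rfl
  · simp

lemma aux_summable {α c : ℝ} (hα : 1 < α) (hc : 0 < c) :
    Summable (fun n : ℕ => Real.log (1 + c / ((n:ℝ) + 1) ^ α)) := by
  apply Summable.of_nonneg_of_le
    (fun n => Real.log_nonneg (by
      have : 0 < c / ((n:ℝ) + 1) ^ α :=
        div_pos hc (Real.rpow_pos_of_pos (by positivity) α)
      linarith))
    (fun n => ?_) ((aux_summable0 hα).mul_left c)
  have hp : 0 < ((n:ℝ) + 1) ^ α := Real.rpow_pos_of_pos (by positivity) α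
  have hx : 0 < c / ((n:ℝ) + 1) ^ α := div_pos hc hp
  have := Real.log_le_sub_one_of_pos (show (0:ℝ) < 1 + c / ((n:ℝ)+1)^α by linarith)
  rw [div_eq_mul_inv] at this ⊢
  linarith

lemma aux_compare {α c : ℝ} (hα : 1 < α) (hc : 0 < c) :
    |(∑' r : ℕ, Real.log (1 + c / ((r:ℝ) + 1) ^ α))
        - (π / Real.sin (π / α)) * c ^ (1/α)|
      ≤ Real.log (1 + c) + 4 * α := by
  have hα0 : (0:ℝ) < α := by linarith
  set f : ℝ → ℝ := fun t => Real.log (1 + c / t ^ α) with hf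
  obtain ⟨hInt, hVal⟩ := aux_main hα hc
  -- antitone
  have hanti : ∀ x y : ℝ, 0 < x → x ≤ y → f y ≤ f x := by
    intro x y hx hxy
    apply Real.log_le_log (by
      have : 0 < c / y ^ α := div_pos hc (Real.rpow_pos_of_pos (by linarith) α)
      linarith)
    have h1 : x ^ α ≤ y ^ α := Real.rpow_le_rpow hx.le hxy hα0.le
    have h2 : 0 < x ^ α := Real.rpow_pos_of_pos hx α
    have := div_le_div_of_nonneg_left hc.le h2 h1
    linarith
  have hnonnegf : ∀ t : ℝ, 0 < t → 0 ≤ f t := by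
    intro t ht
    apply Real.log_nonneg
    have : 0 < c / t ^ α := div_pos hc (Real.rpow_pos_of_pos ht α)
    linarith
  -- HasSum for union over Ioi 0
  have hU0 : (⋃ n : ℕ, Ioc ((n:ℝ)) ((n:ℝ) + 1)) = Ioi (0:ℝ) := by
    have := aux_union 0 le_rfl
    simpa using this
  have hs0 : HasSum (fun n : ℕ => ∫ t in Ioc ((n:ℝ)) ((n:ℝ) + 1), f t)
      (∫ t in Ioi (0:ℝ), f t) := by
    have := MeasureTheory.hasSum_integral_iUnion
      (s := fun n : ℕ => Ioc ((n:ℝ)) ((n:ℝ) + 1))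
      (fun n => measurableSet_Ioc) (by simpa using aux_disj 0) (by rw [hU0]; exact hInt)
    rwa [hU0] at this
  have hU1 : (⋃ n : ℕ, Ioc ((n:ℝ) + 1) ((n:ℝ) + 1 + 1)) = Ioi (1:ℝ) :=
    aux_union 1 zero_le_one
  have hs1 : HasSum (fun n : ℕ => ∫ t in Ioc ((n:ℝ) + 1) ((n:ℝ) + 1 + 1), f t)
      (∫ t in Ioi (1:ℝ), f t) := by
    have := MeasureTheory.hasSum_integral_iUnion
      (s := fun n : ℕ => Ioc ((n:ℝ) + 1) ((n:ℝ) + 1 + 1))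
      (fun n => measurableSet_Ioc) (aux_disj 1)
      (by rw [hU1]; exact hInt.mono_set (Ioi_subset_Ioi zero_le_one))
    rwa [hU1] at this
  -- per-interval bounds
  have hIntIoc : ∀ a b : ℝ, 0 ≤ a → IntegrableOn f (Ioc a b) := by
    intro a b ha
    apply hInt.mono_set
    intro x hx
    exact lt_of_le_of_lt ha hx.1
  have hupper : ∀ n : ℕ, f ((n:ℝ) + 1) ≤ ∫ t in Ioc ((n:ℝ)) ((n:ℝ) + 1), f t := by
    intro n
    have h := setIntegral_ge_of_const_le (μ := volume) (s := Ioc ((n:ℝ)) ((n:ℝ) + 1))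
      (c := f ((n:ℝ) + 1)) measurableSet_Ioc
      (by rw [Real.volume_Ioc]; exact ENNReal.ofReal_ne_top)
      (fun x hx => hanti x ((n:ℝ) + 1)
        (lt_of_le_of_lt (Nat.cast_nonneg n) hx.1) hx.2)
      (hIntIoc _ _ (Nat.cast_nonneg n))
    rw [Real.volume_real_Ioc] at h
    simpa using h
  have hlower : ∀ n : ℕ, ∫ t in Ioc ((n:ℝ) + 1) ((n:ℝ) + 1 + 1), f t ≤ f ((n:ℝ) + 1) := by
    intro n
    have hmono := setIntegral_mono_on (hIntIoc ((n:ℝ)+1) ((n:ℝ)+1+1) (by positivity))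
      (integrableOn_const (by rw [Real.volume_Ioc]; exact ENNReal.ofReal_ne_top))
      measurableSet_Ioc
      (fun x hx => hanti ((n:ℝ)+1) x (by positivity) hx.1.le)
    rw [setIntegral_const, Real.volume_real_Ioc] at hmono
    simpa using hmono
  -- summability
  have hgsum : Summable (fun n : ℕ => f ((n:ℝ) + 1)) := aux_summable hα hc
  -- upper bound on tsum
  have hup : (∑' n : ℕ, f ((n:ℝ) + 1)) ≤ ∫ t in Ioi (0:ℝ), f t := by
    rw [← hs0.tsum_eq]
    exact Summable.tsum_le_tsum hupper hgsum hs0.summable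
  -- lower bound
  have hlo : (∫ t in Ioi (1:ℝ), f t) ≤ ∑' n : ℕ, f ((n:ℝ) + 1) := by
    rw [← hs1.tsum_eq]
    exact Summable.tsum_le_tsum hlower hs1.summable hgsum
  -- split integral
  have hsplit : ∫ t in Ioi (0:ℝ), f t
      = (∫ t in Ioc (0:ℝ) 1, f t) + ∫ t in Ioi (1:ℝ), f t := by
    rw [← MeasureTheory.setIntegral_union (Set.Ioc_disjoint_Ioi le_rfl) measurableSet_Ioi
      (hIntIoc 0 1 le_rfl) (hInt.mono_set (Ioi_subset_Ioi zero_le_one))]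
    rw [Ioc_union_Ioi_eq_Ioi zero_le_one]
  -- bound on Ioc 0 1 part: nonneg and ≤ log(1+c) + 4α
  have h01nonneg : 0 ≤ ∫ t in Ioc (0:ℝ) 1, f t := by
    apply setIntegral_nonneg measurableSet_Ioc
    intro t ht
    exact hnonnegf t ht.1
  have h01le : ∫ t in Ioc (0:ℝ) 1, f t ≤ Real.log (1 + c) + 4 * α := by
    have hbnd : ∀ t ∈ Ioc (0:ℝ) 1, f t ≤ Real.log (1 + c) + (2*α) * t ^ (-(1/2) : ℝ) := by
      intro t ht
      have ht0 : (0:ℝ) < t := ht.1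
      have hta : (0:ℝ) < t ^ α := Real.rpow_pos_of_pos ht0 α
      have htle : t ^ α ≤ 1 := Real.rpow_le_one ht0.le ht.2 hα0.le
      have hstep1 : f t ≤ Real.log (1 + c) - α * Real.log t := by
        have harg : 1 + c / t ^ α ≤ (1 + c) / t ^ α := by
          rw [add_div]
          have h1 : (1:ℝ) ≤ 1 / t ^ α := by
            rw [le_div_iff₀ hta]; linarith
          linarith
        have := Real.log_le_log (by positivity) harg
        rw [Real.log_div (by positivity) (ne_of_gt hta), Real.log_rpow ht0] at this
        exact this
      have hstep2 : -Real.log t ≤ 2 * t ^ (-(1/2) : ℝ) := by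
        have hp : (0:ℝ) < t ^ (-(1/2) : ℝ) := Real.rpow_pos_of_pos ht0 _
        have h := Real.log_le_sub_one_of_pos hp
        rw [Real.log_rpow ht0] at h
        nlinarith
      nlinarith [mul_le_mul_of_nonneg_left hstep2 hα0.le]
    have hgint : IntegrableOn
        (fun t : ℝ => Real.log (1 + c) + (2*α) * t ^ (-(1/2) : ℝ)) (Ioc 0 1) := by
      have h1 : IntervalIntegrable
          (fun t : ℝ => Real.log (1 + c) + (2*α) * t ^ (-(1/2) : ℝ)) volume 0 1 :=
        intervalIntegrable_const.add ((intervalIntegrable_rpow' (by norm_num)).const_mul _)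
      rwa [intervalIntegrable_iff_integrableOn_Ioc_of_le zero_le_one] at h1
    have hmono := setIntegral_mono_on (hIntIoc 0 1 le_rfl) hgint measurableSet_Ioc hbnd
    have hval : ∫ t in Ioc (0:ℝ) 1, (Real.log (1 + c) + (2*α) * t ^ (-(1/2) : ℝ))
        = Real.log (1 + c) + 4 * α := by
      rw [← intervalIntegral.integral_of_le zero_le_one]
      rw [intervalIntegral.integral_add intervalIntegrable_const
        ((intervalIntegrable_rpow' (by norm_num)).const_mul _)]
      rw [intervalIntegral.integral_const, intervalIntegral.integral_const_mul]
      rw [integral_rpow (Or.inl (by norm_num))]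
      norm_num
      ring
    linarith [hmono, hval.le, hval.ge]
  -- assemble
  have hI := hVal
  have hS : (∑' r : ℕ, Real.log (1 + c / ((r:ℝ) + 1) ^ α)) = ∑' n : ℕ, f ((n:ℝ) + 1) := rfl
  rw [hS, ← hI]
  have h1 : (∑' n : ℕ, f ((n:ℝ) + 1)) - (∫ t in Ioi (0:ℝ), f t) ≤ Real.log (1 + c) + 4 * α := by
    have hlogpos : 0 ≤ Real.log (1 + c) := Real.log_nonneg (by linarith)
    linarith
  have h2 : -(Real.log (1 + c) + 4 * α)
      ≤ (∑' n : ℕ, f ((n:ℝ) + 1)) - (∫ t in Ioi (0:ℝ), f t) := by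
    linarith
  exact abs_le.mpr ⟨h2, h1⟩

/-- For a Zipf popularity distribution `q_r = A/r^α` with `α > 1` and `A = 1/ζ(α)`,
`log F(z) = ∑_{r≥1} log(1 + A z/r^α)` satisfies, as real `z → +∞`,
`log F(z) = α(ρ_α A z)^{1/α} + O(log z)`, where `ρ_α = ((π/α)/sin(π/α))^α`. -/
theorem stmt11 (α A ρ : ℝ) (hα : 1 < α)
    (hA : A = (∑' r : ℕ, 1 / ((r : ℝ) + 1) ^ α)⁻¹)
    (hρ : ρ = (π / α / Real.sin (π / α)) ^ α) :
    (fun z : ℝ =>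
        (∑' r : ℕ, Real.log (1 + A * z / ((r : ℝ) + 1) ^ α)) - α * (ρ * A * z) ^ (1 / α))
      =O[atTop] Real.log := by
  have hα0 : (0:ℝ) < α := by linarith
  have hsin : 0 < Real.sin (π / α) := by
    apply Real.sin_pos_of_pos_of_lt_pi
    · positivity
    · rw [div_lt_iff₀ hα0]
      nlinarith [Real.pi_pos]
  have hApos : 0 < A := by
    rw [hA, inv_pos]
    have hsum : Summable (fun r : ℕ => 1 / ((r:ℝ) + 1) ^ α) := by
      simpa [one_div] using aux_summable0 hα
    apply Summable.tsum_pos hsum (fun i => by positivity) 0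
    positivity
  have hq : 0 < π / α / Real.sin (π / α) := by
    have := Real.pi_pos
    positivity
  have hρpos : 0 < ρ := by
    rw [hρ]
    positivity
  have hmain : ∀ z : ℝ, 0 < z →
      α * (ρ * A * z) ^ (1/α) = (π / Real.sin (π / α)) * (A * z) ^ (1/α) := by
    intro z hz
    rw [hρ, mul_assoc, Real.mul_rpow (by positivity) (by positivity),
      ← Real.rpow_mul hq.le, mul_one_div, div_self (ne_of_gt hα0), Real.rpow_one]
    rw [← mul_assoc]
    congr 1
    field_simp
  rw [Asymptotics.isBigO_iff]
  refine ⟨Real.log (1 + A) + 4 * α + 1, ?_⟩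
  filter_upwards [Filter.eventually_ge_atTop (Real.exp 1),
    Filter.eventually_ge_atTop (1:ℝ)] with z hz1 hz2
  have hz0 : (0:ℝ) < z := lt_of_lt_of_le one_pos hz2
  have hlogz : 1 ≤ Real.log z := by
    calc (1:ℝ) = Real.log (Real.exp 1) := (Real.log_exp 1).symm
    _ ≤ Real.log z := Real.log_le_log (Real.exp_pos 1) hz1
  have hcomp := aux_compare hα (show (0:ℝ) < A * z by positivity)
  rw [Real.norm_eq_abs, Real.norm_eq_abs, abs_of_nonneg (by linarith : (0:ℝ) ≤ Real.log z)]
  rw [hmain z hz0]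
  have hlog2 : Real.log (1 + A * z) ≤ Real.log (1 + A) + Real.log z := by
    rw [← Real.log_mul (by positivity) (ne_of_gt hz0)]
    apply Real.log_le_log (by positivity)
    nlinarith
  have hC0 : 0 ≤ Real.log (1 + A) + 4 * α := by
    have : (0:ℝ) ≤ Real.log (1 + A) := Real.log_nonneg (by linarith)
    linarith
  have h1 : |(∑' r : ℕ, Real.log (1 + A * z / ((r:ℝ) + 1) ^ α))
      - (π / Real.sin (π / α)) * (A * z) ^ (1/α)|
      ≤ Real.log (1 + A) + 4 * α + Real.log z := by
    calc _ ≤ Real.log (1 + A * z) + 4 * α := hcomp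
    _ ≤ _ := by linarith
  calc _ ≤ Real.log (1 + A) + 4 * α + Real.log z := h1
  _ ≤ (Real.log (1 + A) + 4 * α + 1) * Real.log z := by nlinarith
end

section
/- For a Zipf distribution with exponent α > 1, the unique positive solution θ_C of Σ_{r≥1} q_r θ/(1 + q_r θ) = C satisfies θ_C ~ C^α/(A ρ_α) as C → ∞, where ρ_α = (π/(α sin(π/α)))^α and A = 1/ζ(α). -/
open Real Filter Asymptotics MeasureTheory Set Topology

lemma lem_beta {s : ℝ} (h0 : 0 < s) (h1 : s < 1) :
    ∫ x in Set.Ioo (0:ℝ) 1, x ^ (s-1) * (1-x) ^ (-s) = π / Real.sin (π * s) := by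
  have hB : Complex.betaIntegral s (1-s) = ↑(π / Real.sin (π * s)) := by
    have h := Complex.Gamma_mul_Gamma_eq_betaIntegral (s := (s:ℂ)) (t := (1 - s : ℂ))
      (by simpa using h0) (by simp [Complex.sub_re]; linarith)
    rw [add_sub_cancel, Complex.Gamma_one, one_mul] at h
    rw [← h, Complex.Gamma_mul_Gamma_one_sub]
    push_cast
    rfl
  have h2 : Complex.betaIntegral s (1-s)
      = ↑(∫ x in Set.Ioo (0:ℝ) 1, x ^ (s-1) * (1-x) ^ (-s)) := by
    rw [Complex.betaIntegral]
    have hcongr : ∀ x ∈ Set.uIcc (0:ℝ) 1,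
        (x:ℂ) ^ ((s:ℂ) - 1) * ((1:ℂ) - x) ^ ((1:ℂ) - s - 1)
          = ((x ^ (s-1) * (1-x) ^ (-s) : ℝ) : ℂ) := by
      intro x hx
      rw [Set.uIcc_of_le zero_le_one] at hx
      have hx0 : (0:ℝ) ≤ x := hx.1
      have hx1 : (0:ℝ) ≤ 1 - x := by linarith [hx.2]
      rw [Complex.ofReal_mul, Complex.ofReal_cpow hx0, Complex.ofReal_cpow hx1]
      push_cast
      ring_nf
    rw [intervalIntegral.integral_congr hcongr, intervalIntegral.integral_ofReal,
      intervalIntegral.integral_of_le zero_le_one,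
      MeasureTheory.integral_Ioc_eq_integral_Ioo]
  have := hB.symm.trans h2
  exact_mod_cast this.symm

lemma lem_image : (fun u : ℝ => u / (1 + u)) '' Set.Ioi 0 = Set.Ioo 0 1 := by
  ext y
  constructor
  · rintro ⟨u, hu, rfl⟩
    have hu : (0:ℝ) < u := hu
    have h1u : (0:ℝ) < 1 + u := by linarith
    exact ⟨by positivity, by rw [div_lt_one h1u]; linarith⟩
  · rintro ⟨hy0, hy1⟩
    have h1y : (0:ℝ) < 1 - y := by linarith
    refine ⟨y / (1 - y), Set.mem_Ioi.mpr (div_pos hy0 h1y), ?_⟩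
    field_simp
    ring

lemma lem_subst_b {s : ℝ} (h0 : 0 < s) (h1 : s < 1) :
    ∫ x in Set.Ioo (0:ℝ) 1, x ^ (s-1) * (1-x) ^ (-s)
      = ∫ u in Set.Ioi (0:ℝ), u ^ (s-1) * (1 + u)⁻¹ := by
  have hderiv : ∀ u ∈ Set.Ioi (0:ℝ), HasDerivWithinAt (fun u : ℝ => u / (1 + u))
      (((1 + u) ^ 2)⁻¹) (Set.Ioi 0) u := by
    intro u hu
    have hu : (0:ℝ) < u := hu
    have h1u : (1:ℝ) + u ≠ 0 := by positivity
    have := (hasDerivAt_id u).div ((hasDerivAt_id u).const_add 1) h1u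
    have h2 : HasDerivWithinAt (id / fun x => 1 + x) ((1 + u) ^ 2)⁻¹ (Set.Ioi 0) u := by
      simpa using this.hasDerivWithinAt
    exact h2
  have hinj : Set.InjOn (fun u : ℝ => u / (1 + u)) (Set.Ioi 0) := by
    intro a ha b hb hab
    have ha : (0:ℝ) < a := ha
    have hb : (0:ℝ) < b := hb
    have h1a : (1:ℝ) + a ≠ 0 := by positivity
    have h1b : (1:ℝ) + b ≠ 0 := by positivity
    field_simp at hab
    linarith
  have himg := MeasureTheory.integral_image_eq_integral_abs_deriv_smul measurableSet_Ioi
    hderiv hinj (fun x => x ^ (s-1) * (1-x) ^ (-s))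
  rw [lem_image] at himg
  rw [himg]
  refine MeasureTheory.setIntegral_congr_fun measurableSet_Ioi fun u hu => ?_
  have hu : (0:ℝ) < u := hu
  have h1u : (0:ℝ) < 1 + u := by linarith
  have e1 : (1:ℝ) - u / (1 + u) = (1 + u)⁻¹ := by field_simp; ring
  have key : ∀ a b c : ℝ, (1+u)^a * (1+u)^b * (1+u)^c = (1+u)^(a+b+c) := by
    intros; rw [← Real.rpow_add h1u, ← Real.rpow_add h1u]
  rw [smul_eq_mul, abs_of_nonneg (by positivity), e1,
    Real.div_rpow hu.le h1u.le, Real.inv_rpow h1u.le, Real.rpow_neg h1u.le, inv_inv,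
    ← Real.rpow_natCast (1+u) 2, ← Real.rpow_neg h1u.le,
    div_eq_mul_inv, ← Real.rpow_neg h1u.le]
  have e2 : (1+u)^(-(2:ℕ):ℝ) * (u^(s-1) * (1+u)^(-(s-1)) * (1+u)^s)
      = u^(s-1) * ((1+u)^(-((2:ℕ):ℝ)) * (1+u)^(-(s-1)) * (1+u)^s) := by ring
  rw [e2, key, show (-((2:ℕ):ℝ)) + (-(s-1)) + s = -1 by push_cast; ring,
    Real.rpow_neg_one]

lemma lem_subst_a {α : ℝ} (hα : 1 < α) :
    ∫ u in Set.Ioi (0:ℝ), u ^ (α⁻¹-1) * (1 + u)⁻¹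
      = α * ∫ t in Set.Ioi (0:ℝ), (1 + t ^ α)⁻¹ := by
  have hα0 : (0:ℝ) < α := by linarith
  rw [← MeasureTheory.integral_const_mul]
  rw [← integral_comp_rpow_Ioi_of_pos (g := fun y => y ^ (α⁻¹-1) * (1 + y)⁻¹) hα0]
  refine MeasureTheory.setIntegral_congr_fun measurableSet_Ioi fun x hx => ?_
  have hx : (0:ℝ) < x := hx
  rw [smul_eq_mul, ← Real.rpow_mul hx.le]
  have : α * x ^ (α - 1) * (x ^ (α * (α⁻¹ - 1)) * (1 + x ^ α)⁻¹)
      = α * (x ^ (α - 1) * x ^ (α * (α⁻¹ - 1))) * (1 + x ^ α)⁻¹ := by ring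
  rw [this, ← Real.rpow_add hx, show α - 1 + α * (α⁻¹ - 1) = 0 by
    field_simp; ring, Real.rpow_zero, mul_one]

lemma lem_integral {α : ℝ} (hα : 1 < α) :
    ∫ t in Set.Ioi (0:ℝ), (1 + t ^ α)⁻¹ = (π / α) / Real.sin (π / α) := by
  have hα0 : (0:ℝ) < α := by linarith
  have hs0 : 0 < α⁻¹ := by positivity
  have hs1 : α⁻¹ < 1 := by rw [inv_lt_one_iff₀]; right; exact hα
  have h := (lem_beta hs0 hs1).symm.trans ((lem_subst_b hs0 hs1).trans (lem_subst_a hα))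
  -- h : π / sin (π * α⁻¹) = α * ∫ ...
  rw [show π * α⁻¹ = π / α by ring] at h
  have hsin : 0 < Real.sin (π / α) :=
    Real.sin_pos_of_pos_of_lt_pi (by positivity) (div_lt_self Real.pi_pos hα)
  rw [div_right_comm, h, mul_comm α, mul_div_assoc, div_self hα0.ne', mul_one]

section
variable {α : ℝ}

lemma g_cont (hα : 1 < α) : ContinuousOn (fun t : ℝ => (1 + t ^ α)⁻¹) (Set.Ici 0) := by
  apply ContinuousOn.inv₀
  · exact continuousOn_const.add (continuousOn_id.rpow_const fun x hx => Or.inr (by linarith))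
  · intro x hx
    have : (0:ℝ) ≤ x ^ α := Real.rpow_nonneg hx α
    positivity

lemma g_anti (hα : 1 < α) : AntitoneOn (fun t : ℝ => (1 + t ^ α)⁻¹) (Set.Ici 0) := by
  intro a ha b hb hab
  have h1 : a ^ α ≤ b ^ α := Real.rpow_le_rpow ha hab (by linarith)
  have h2 : (0:ℝ) ≤ a ^ α := Real.rpow_nonneg ha α
  have h3 : (0:ℝ) < 1 + a ^ α := by linarith
  exact inv_anti₀ h3 (by linarith)

lemma g_pos (hα : 1 < α) {t : ℝ} (ht : 0 ≤ t) : 0 < (1 + t ^ α)⁻¹ := by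
  have : (0:ℝ) ≤ t ^ α := Real.rpow_nonneg ht α
  positivity

lemma g_le_one (hα : 1 < α) {t : ℝ} (ht : 0 ≤ t) : (1 + t ^ α)⁻¹ ≤ 1 := by
  have : (0:ℝ) ≤ t ^ α := Real.rpow_nonneg ht α
  rw [inv_le_one_iff₀]
  right; linarith

lemma g_int (hα : 1 < α) : IntegrableOn (fun t : ℝ => (1 + t ^ α)⁻¹) (Set.Ioi 0) := by
  rw [show Set.Ioi (0:ℝ) = Set.Ioc 0 1 ∪ Set.Ioi 1 from (Set.Ioc_union_Ioi_eq_Ioi zero_le_one).symm]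
  apply MeasureTheory.IntegrableOn.union
  · exact (((g_cont hα).mono (Set.Icc_subset_Ici_self : Set.Icc (0:ℝ) 1 ⊆ Set.Ici 0)).integrableOn_Icc).mono_set
      Set.Ioc_subset_Icc_self
  · have hm : IntegrableOn (fun t : ℝ => t ^ (-α)) (Set.Ioi 1) :=
      integrableOn_Ioi_rpow_of_lt (by linarith) one_pos
    apply hm.mono'
    · exact ((g_cont hα).mono fun x (hx : (1:ℝ) < x) => le_of_lt hx |>.trans_lt'
        (by norm_num) |>.le).aestronglyMeasurable measurableSet_Ioi
    · filter_upwards [MeasureTheory.ae_restrict_mem measurableSet_Ioi] with t ht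
      have ht1 : (1:ℝ) < t := ht
      have htα : (0:ℝ) < t ^ α := Real.rpow_pos_of_pos (by linarith) α
      rw [Real.norm_eq_abs, abs_of_nonneg (le_of_lt (g_pos hα (by linarith))), Real.rpow_neg (by linarith)]
      exact inv_anti₀ htα (by linarith)

lemma sum_le_I (hα : 1 < α) {h : ℝ} (hh : 0 < h) (N : ℕ) :
    ∑ n ∈ Finset.range N, h * (1 + (((n:ℝ)+1)*h) ^ α)⁻¹
      ≤ ∫ t in Set.Ioi (0:ℝ), (1 + t ^ α)⁻¹ := by
  set g : ℝ → ℝ := fun t : ℝ => (1 + t ^ α)⁻¹ with hg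
  have hint : ∀ k : ℕ, k < N → IntervalIntegrable g volume ((k:ℝ)*h) (((k:ℝ)+1)*h) := by
    intro k _
    apply ContinuousOn.intervalIntegrable
    apply (g_cont hα).mono
    rw [Set.uIcc_of_le (by nlinarith)]
    intro x hx
    have : (0:ℝ) ≤ (k:ℝ)*h := by positivity
    exact le_trans this hx.1
  have hint' : ∀ k : ℕ, k < N → IntervalIntegrable g volume ((fun k : ℕ => (k:ℝ)*h) k)
      ((fun k : ℕ => (k:ℝ)*h) (k+1)) := by
    intro k hk; push_cast; exact hint k hk
  have hsum := intervalIntegral.sum_integral_adjacent_intervals hint'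
  calc ∑ n ∈ Finset.range N, h * (1 + (((n:ℝ)+1)*h) ^ α)⁻¹
      ≤ ∑ n ∈ Finset.range N, ∫ t in ((n:ℝ)*h)..(((n:ℝ)+1)*h), g t := by
        apply Finset.sum_le_sum
        intro k hk
        have hk' := Finset.mem_range.mp hk
        have h1 : ((k:ℝ))*h ≤ ((k:ℝ)+1)*h := by nlinarith
        have : h * (1 + (((k:ℝ)+1)*h) ^ α)⁻¹
            = ∫ _ in ((k:ℝ)*h)..(((k:ℝ)+1)*h), (1 + (((k:ℝ)+1)*h) ^ α)⁻¹ := by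
          rw [intervalIntegral.integral_const, smul_eq_mul]
          ring_nf
        rw [this]
        apply intervalIntegral.integral_mono_on h1 (by simp) (hint k hk')
        intro x hx
        have hx0 : (0:ℝ) ≤ x := le_trans (by positivity) hx.1
        exact g_anti hα hx0 (by positivity : (0:ℝ) ≤ ((k:ℝ)+1)*h) hx.2
    _ = ∫ t in ((0:ℝ))..((N:ℝ)*h), g t := by
        have := hsum
        push_cast at this
        simpa using this
    _ ≤ ∫ t in Set.Ioi (0:ℝ), g t := by
        rw [intervalIntegral.integral_of_le (by positivity)]
        apply MeasureTheory.setIntegral_mono_set (g_int hα)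
        · filter_upwards [MeasureTheory.ae_restrict_mem measurableSet_Ioi] with t ht
          exact le_of_lt (g_pos hα (le_of_lt ht))
        · exact HasSubset.Subset.eventuallyLE fun x hx => hx.1
end

section
variable {α : ℝ}


lemma g_summable (hα : 1 < α) {h : ℝ} (hh : 0 < h) :
    Summable (fun n : ℕ => (1 + (((n:ℝ)+1)*h) ^ α)⁻¹) := by
  apply summable_of_sum_range_le (c := (∫ t in Set.Ioi (0:ℝ), (1 + t ^ α)⁻¹) / h)
    (fun n => le_of_lt (g_pos hα (by positivity)))
  intro n
  rw [le_div_iff₀ hh, Finset.sum_mul]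
  calc ∑ i ∈ Finset.range n, (1 + (((i:ℝ)+1)*h) ^ α)⁻¹ * h
      = ∑ i ∈ Finset.range n, h * (1 + (((i:ℝ)+1)*h) ^ α)⁻¹ := by
        simp [mul_comm]
    _ ≤ _ := sum_le_I hα hh n

lemma tsum_le_I (hα : 1 < α) {h : ℝ} (hh : 0 < h) :
    h * ∑' n : ℕ, (1 + (((n:ℝ)+1)*h) ^ α)⁻¹ ≤ ∫ t in Set.Ioi (0:ℝ), (1 + t ^ α)⁻¹ := by
  rw [← tsum_mul_left]
  exact Summable.tsum_le_of_sum_range_le ((g_summable hα hh).mul_left h)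
    (fun n => sum_le_I hα hh n)

lemma I_le_tsum (hα : 1 < α) {h : ℝ} (hh : 0 < h) :
    (∫ t in Set.Ioi (0:ℝ), (1 + t ^ α)⁻¹) - h
      ≤ h * ∑' n : ℕ, (1 + (((n:ℝ)+1)*h) ^ α)⁻¹ := by
  set g : ℝ → ℝ := fun t : ℝ => (1 + t ^ α)⁻¹ with hgdef
  have hsub : Set.Ioi h ⊆ Set.Ioi (0:ℝ) := fun x hx => lt_trans hh hx
  have hIoih : IntegrableOn g (Set.Ioi h) := (g_int hα).mono_set hsub
  -- step 1 : ∫ t in Ioi h, g ≤ h * tsum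
  have step1 : (∫ t in Set.Ioi h, g t) ≤ h * ∑' n : ℕ, (1 + (((n:ℝ)+1)*h) ^ α)⁻¹ := by
    have htd : Tendsto (fun N : ℕ => ((N:ℝ)+1)*h) atTop atTop := by
      apply Tendsto.atTop_mul_const hh
      exact tendsto_atTop_add_const_right _ _ tendsto_natCast_atTop_atTop
    have hlim := MeasureTheory.intervalIntegral_tendsto_integral_Ioi h hIoih htd
    apply le_of_tendsto hlim
    filter_upwards with N
    -- ∫ t in h..((N+1)*h), g ≤ h * tsum
    have hint : ∀ k : ℕ, k < N → IntervalIntegrable g volume (((k:ℝ)+1)*h) (((k:ℝ)+2)*h) := by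
      intro k _
      apply ContinuousOn.intervalIntegrable
      apply (g_cont hα).mono
      rw [Set.uIcc_of_le (by nlinarith)]
      intro x hx
      exact le_trans (by positivity : (0:ℝ) ≤ ((k:ℝ)+1)*h) hx.1
    have hint' : ∀ k : ℕ, k < N → IntervalIntegrable g volume
        ((fun k : ℕ => ((k:ℝ)+1)*h) k) ((fun k : ℕ => ((k:ℝ)+1)*h) (k+1)) := by
      intro k hk
      have := hint k hk
      push_cast
      convert this using 2
      ring
    have hsum := intervalIntegral.sum_integral_adjacent_intervals hint'
    calc ∫ t in h..((N:ℝ)+1)*h, g t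
        = ∑ k ∈ Finset.range N, ∫ t in (((k:ℝ)+1)*h)..(((k:ℝ)+1+1)*h), g t := by
          rw [show ∑ k ∈ Finset.range N, ∫ t in (((k:ℝ)+1)*h)..(((k:ℝ)+1+1)*h), g t
              = ∑ k ∈ Finset.range N, ∫ t in (((k:ℝ)+1)*h)..((((k+1:ℕ):ℝ)+1)*h), g t from
            Finset.sum_congr rfl fun k _ => by push_cast; ring_nf, hsum]
          norm_num
      _ ≤ ∑ k ∈ Finset.range N, h * (1 + (((k:ℝ)+1)*h) ^ α)⁻¹ := by
          apply Finset.sum_le_sum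
          intro k hk
          have h1 : ((k:ℝ)+1)*h ≤ ((k:ℝ)+1+1)*h := by nlinarith
          have heq : h * (1 + (((k:ℝ)+1)*h) ^ α)⁻¹
              = ∫ _ in (((k:ℝ)+1)*h)..(((k:ℝ)+1+1)*h), (1 + (((k:ℝ)+1)*h) ^ α)⁻¹ := by
            rw [intervalIntegral.integral_const, smul_eq_mul]
            ring_nf
          rw [heq]
          apply intervalIntegral.integral_mono_on h1 ?_ (by simp)
          · intro x hx
            exact g_anti hα (by positivity : (0:ℝ) ≤ ((k:ℝ)+1)*h) 
              (le_trans (by positivity) hx.1) hx.1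
          · apply ContinuousOn.intervalIntegrable
            apply (g_cont hα).mono
            rw [Set.uIcc_of_le h1]
            intro x hx
            exact le_trans (by positivity : (0:ℝ) ≤ ((k:ℝ)+1)*h) hx.1
      _ ≤ h * ∑' n : ℕ, (1 + (((n:ℝ)+1)*h) ^ α)⁻¹ := by
          rw [← tsum_mul_left]
          apply Summable.sum_le_tsum _ (fun i _ => ?_) ((g_summable hα hh).mul_left h)
          have := g_pos hα (show (0:ℝ) ≤ ((i:ℝ)+1)*h by positivity)
          positivity
  -- step 2 : I - ∫ t in Ioc 0 h ≤ ∫ t in Ioi h and ∫ Ioc 0 h ≤ h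
  have hIoc : IntegrableOn g (Set.Ioc 0 h) := (g_int hα).mono_set Set.Ioc_subset_Ioi_self
  have hsplit : (∫ t in Set.Ioc 0 h, g t) + ∫ t in Set.Ioi h, g t
      = ∫ t in Set.Ioi (0:ℝ), g t := by
    rw [← MeasureTheory.setIntegral_union (Set.Ioc_disjoint_Ioi le_rfl) measurableSet_Ioi
      hIoc hIoih, Set.Ioc_union_Ioi_eq_Ioi hh.le]
  have hIoch : (∫ t in Set.Ioc 0 h, g t) ≤ h := by
    calc (∫ t in Set.Ioc 0 h, g t) ≤ ∫ _ in Set.Ioc 0 h, (1:ℝ) := by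
          apply MeasureTheory.setIntegral_mono_on hIoc (by simp) measurableSet_Ioc
          intro x hx
          exact g_le_one hα hx.1.le
      _ = h := by simp [Real.volume_Ioc, hh.le]
  linarith [step1, hsplit, hIoch]
end
/-- For a Zipf distribution with exponent `α > 1`, the unique positive solution `θ_C` of
`∑_{r≥1} q_r θ/(1 + q_r θ) = C` satisfies `θ_C ~ C^α/(Aρ_α)` as `C → ∞`, where
`ρ_α = (π/(α sin(π/α)))^α` and `A = 1/ζ(α)`. -/
theorem stmt12 (α A ρ : ℝ) (hα : 1 < α)
    (hA : A = (∑' r : ℕ, 1 / ((r : ℝ) + 1) ^ α)⁻¹)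
    (hρ : ρ = (π / α / Real.sin (π / α)) ^ α)
    (θ : ℕ → ℝ) (hθpos : ∀ C, 1 ≤ C → 0 < θ C)
    (hθ : ∀ C, 1 ≤ C →
      (∑' r : ℕ, (A / ((r : ℝ) + 1) ^ α) * θ C / (1 + (A / ((r : ℝ) + 1) ^ α) * θ C)) = C) :
    Asymptotics.IsEquivalent atTop θ (fun C => (C : ℝ) ^ α / (A * ρ)) := by
  have hα0 : (0:ℝ) < α := lt_trans one_pos hα
  set I : ℝ := ∫ t in Set.Ioi (0:ℝ), (1 + t ^ α)⁻¹ with hIdef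
  have hIval : I = (π/α) / Real.sin (π/α) := lem_integral hα
  have hsin : 0 < Real.sin (π / α) :=
    Real.sin_pos_of_pos_of_lt_pi (by positivity) (div_lt_self Real.pi_pos hα)
  have hIpos : 0 < I := by
    rw [hIval]; positivity
  have hρI : ρ = I ^ α := by rw [hρ, hIval]
  have hρpos : 0 < ρ := by rw [hρI]; exact Real.rpow_pos_of_pos hIpos α
  have hApos : 0 < A := by
    have hsummable : Summable (fun n : ℕ => 1 / ((n:ℝ)+1) ^ α) := by
      have h1 : Summable (fun n : ℕ => 1 / (n:ℝ) ^ α) :=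
        (Real.summable_one_div_nat_rpow).mpr hα
      have h2 := h1.comp_injective Nat.succ_injective
      apply h2.congr
      intro n
      simp only [Function.comp_apply]
      push_cast
      ring_nf
    have hpos : 0 < ∑' n : ℕ, 1 / ((n:ℝ)+1) ^ α := by
      apply Summable.tsum_pos hsummable (fun n => by positivity) 0
      norm_num
    rw [hA]
    positivity
  -- the key squeeze for each C ≥ 1
  have key : ∀ C : ℕ, 1 ≤ C →
      I - I/(C:ℝ) ≤ (C:ℝ) * (A * θ C) ^ (-α⁻¹) ∧ (C:ℝ) * (A * θ C) ^ (-α⁻¹) ≤ I := by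
    intro C hC
    have hC1 : (1:ℝ) ≤ (C:ℝ) := by exact_mod_cast hC
    have hC0 : (0:ℝ) < (C:ℝ) := by linarith
    have hx : 0 < A * θ C := mul_pos hApos (hθpos C hC)
    set x : ℝ := A * θ C with hxdef
    set h : ℝ := x ^ (-α⁻¹) with hhdef
    have hh : 0 < h := Real.rpow_pos_of_pos hx _
    have hhα : h ^ α = x⁻¹ := by
      rw [hhdef, ← Real.rpow_mul hx.le, show (-α⁻¹) * α = -1 by field_simp,
        Real.rpow_neg_one]
    have hsumeq : (∑' r : ℕ, (A / ((r : ℝ) + 1) ^ α) * θ C / (1 + (A / ((r : ℝ) + 1) ^ α) * θ C))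
        = ∑' r : ℕ, (1 + (((r:ℝ)+1)*h) ^ α)⁻¹ := by
      apply tsum_congr
      intro r
      have hr1 : (0:ℝ) < (r:ℝ) + 1 := by positivity
      have hp : (0:ℝ) < ((r:ℝ)+1) ^ α := Real.rpow_pos_of_pos hr1 α
      have e1 : (A / ((r : ℝ) + 1) ^ α) * θ C = x / ((r:ℝ)+1) ^ α := by
        rw [hxdef]; ring
      have e2 : (((r:ℝ)+1)*h) ^ α = ((r:ℝ)+1) ^ α * x⁻¹ := by
        rw [Real.mul_rpow hr1.le hh.le, hhα]
      rw [e1, e2]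
      have h1 : (0:ℝ) < 1 + x / ((r:ℝ)+1) ^ α := by positivity
      have h2 : (0:ℝ) < 1 + ((r:ℝ)+1) ^ α * x⁻¹ := by positivity
      have e3 : ((r:ℝ)+1) ^ α * (1 + x / ((r:ℝ)+1) ^ α) = ((r:ℝ)+1) ^ α + x := by
        field_simp
      have e4 : 1 + ((r:ℝ)+1) ^ α * x⁻¹ = (((r:ℝ)+1) ^ α + x) / x := by
        field_simp
        ring
      rw [div_div, e3, e4, inv_div]
    have hCsum := (hθ C hC).symm.trans hsumeq
    -- hCsum : (C:ℝ) = ∑' ...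
    have hub : h * (C:ℝ) ≤ I := by
      have := tsum_le_I hα hh
      rw [← hCsum] at this
      exact this
    have hlb : I - h ≤ h * (C:ℝ) := by
      have := I_le_tsum hα hh
      rw [← hCsum] at this
      exact this
    have hhle : h ≤ I / (C:ℝ) := (le_div_iff₀ hC0).mpr hub
    constructor
    · calc I - I/(C:ℝ) ≤ I - h := by linarith
        _ ≤ h * (C:ℝ) := hlb
        _ = (C:ℝ) * h := mul_comm _ _
    · rw [mul_comm]; exact hub
  have hu : Tendsto (fun C : ℕ => (C:ℝ) * (A * θ C) ^ (-α⁻¹)) atTop (𝓝 I) := by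
    have hlow : Tendsto (fun C : ℕ => I - I/(C:ℝ)) atTop (𝓝 I) := by
      have : Tendsto (fun C : ℕ => I/(C:ℝ)) atTop (𝓝 0) :=
        Tendsto.div_atTop tendsto_const_nhds tendsto_natCast_atTop_atTop
      simpa using tendsto_const_nhds.sub this
    exact tendsto_of_tendsto_of_tendsto_of_le_of_le' hlow tendsto_const_nhds
      (by filter_upwards [eventually_ge_atTop 1] with C hC using (key C hC).1)
      (by filter_upwards [eventually_ge_atTop 1] with C hC using (key C hC).2)
  apply Asymptotics.isEquivalent_of_tendsto_one
  · have h1 : Tendsto (fun C : ℕ => ρ * ((C:ℝ) * (A * θ C) ^ (-α⁻¹)) ^ (-α)) atTop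
        (𝓝 (ρ * I ^ (-α))) := by
      have hcont : ContinuousAt (fun y : ℝ => ρ * y ^ (-α)) I := by
        exact (continuousAt_const.mul (Real.continuousAt_rpow_const I (-α) (Or.inl hIpos.ne')))
      exact hcont.tendsto.comp hu
    have h2 : ρ * I ^ (-α) = 1 := by
      rw [hρI, ← Real.rpow_add hIpos, add_neg_cancel, Real.rpow_zero]
    rw [h2] at h1
    apply h1.congr'
    filter_upwards [eventually_ge_atTop 1] with C hC
    have hC1 : (1:ℝ) ≤ (C:ℝ) := by exact_mod_cast hC
    have hC0 : (0:ℝ) < (C:ℝ) := by linarith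
    have hx : 0 < A * θ C := mul_pos hApos (hθpos C hC)
    have hCα : (0:ℝ) < (C:ℝ) ^ α := Real.rpow_pos_of_pos hC0 α
    have e1 : ((C:ℝ) * (A * θ C) ^ (-α⁻¹)) ^ (-α)
        = (C:ℝ) ^ (-α) * (A * θ C) := by
      rw [Real.mul_rpow hC0.le (Real.rpow_pos_of_pos hx _).le,
        ← Real.rpow_mul hx.le, show (-α⁻¹) * (-α) = 1 by field_simp, Real.rpow_one]
    rw [e1]
    simp only [Pi.div_apply]
    rw [Real.rpow_neg hC0.le]
    field_simp
end

section
/- For every α > 1, the RND prefactor strictly exceeds the LRU prefactor: ρ_α = (π/(α sin(π/α)))^α > (1/α)·Γ(1 − 1/α)^α = λ_α. -/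
open Real

lemma gamma_gt_rpow (x : ℝ) (h0 : 0 < x) (h1 : x < 1) :
    Real.Gamma (1 + x) > x ^ x := by
  have h1x : (0:ℝ) < 1 + x := by linarith
  have hΓ : 0 < Real.Gamma (1 + x) := Real.Gamma_pos_of_pos h1x
  -- convexity inequality
  have hc := Real.convexOn_log_Gamma.2 (Set.mem_Ioi.2 h1x)
      (Set.mem_Ioi.2 (by linarith : (0:ℝ) < 2 + x)) h0.le (by linarith : (0:ℝ) ≤ 1 - x)
      (by ring)
  have hpt : x • (1 + x) + (1 - x) • (2 + x) = (2:ℝ) := by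
    simp only [smul_eq_mul]; ring
  rw [hpt] at hc
  simp only [Function.comp_apply, smul_eq_mul] at hc
  rw [Real.Gamma_two, Real.log_one] at hc
  have hG2 : Real.Gamma (2 + x) = (1 + x) * Real.Gamma (1 + x) := by
    have := Real.Gamma_add_one (by positivity : (1:ℝ) + x ≠ 0)
    rw [show (1:ℝ) + x + 1 = 2 + x by ring] at this
    rw [this]
  rw [hG2, Real.log_mul (by positivity) (ne_of_gt hΓ)] at hc
  -- hc : 0 ≤ x * log Γ(1+x) + (1-x) * (log (1+x) + log Γ(1+x))
  have hL : (x - 1) * Real.log (1 + x) ≤ Real.log (Real.Gamma (1 + x)) := by nlinarith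
  have hlog1 : Real.log (1 + x) ≤ x := by
    have := Real.log_le_sub_one_of_pos h1x
    linarith
  have hlog2 : Real.log x < x - 1 := Real.log_lt_sub_one_of_pos h0 (ne_of_lt h1)
  have hkey : x * Real.log x < Real.log (Real.Gamma (1 + x)) := by nlinarith
  calc x ^ x = Real.exp (x * Real.log x) := by
        rw [Real.rpow_def_of_pos h0, mul_comm]
    _ < Real.exp (Real.log (Real.Gamma (1 + x))) := Real.exp_lt_exp.2 hkey
    _ = Real.Gamma (1 + x) := Real.exp_log hΓ

/-- For every `α > 1` the RND prefactor strictly exceeds the LRU prefactor: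
`ρ_α = (π/(α sin(π/α)))^α > (1/α)Γ(1 - 1/α)^α = λ_α`. -/
theorem stmt16 (α : ℝ) (hα : 1 < α) :
    (π / α / Real.sin (π / α)) ^ α > (1 / α) * Real.Gamma (1 - 1 / α) ^ α := by
  have hαpos : (0:ℝ) < α := by linarith
  set x : ℝ := 1 / α with hx
  have h0 : 0 < x := by positivity
  have h1 : x < 1 := by rw [hx]; rw [div_lt_one hαpos]; exact hα
  have hπα : π / α = π * x := by rw [hx]; ring
  have hsin : 0 < Real.sin (π * x) :=
    Real.sin_pos_of_pos_of_lt_pi (by positivity)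
      (by nlinarith [Real.pi_pos])
  have hrefl : π / α / Real.sin (π / α) = Real.Gamma (1 + x) * Real.Gamma (1 - x) := by
    rw [hπα]
    have h := Real.Gamma_mul_Gamma_one_sub x
    have hΓx : Real.Gamma (1 + x) = x * Real.Gamma x := by
      rw [add_comm]; exact Real.Gamma_add_one (ne_of_gt h0)
    rw [hΓx, mul_assoc, h]
    field_simp
  rw [hrefl]
  have hΓ1 : 0 < Real.Gamma (1 + x) := Real.Gamma_pos_of_pos (by linarith)
  have hΓ2 : 0 < Real.Gamma (1 - x) := Real.Gamma_pos_of_pos (by linarith)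
  rw [Real.mul_rpow hΓ1.le hΓ2.le]
  have hgt : x ^ x < Real.Gamma (1 + x) := gamma_gt_rpow x h0 h1
  have hpow : (x ^ x) ^ α < Real.Gamma (1 + x) ^ α :=
    Real.rpow_lt_rpow (by positivity) hgt hαpos
  have hxx : (x ^ x) ^ α = x := by
    rw [← Real.rpow_mul h0.le]
    rw [hx, one_div_mul_cancel (ne_of_gt hαpos), Real.rpow_one]
  rw [hxx] at hpow
  have hfin : x * Real.Gamma (1 - x) ^ α < Real.Gamma (1 + x) ^ α * Real.Gamma (1 - x) ^ α :=
    mul_lt_mul_of_pos_right hpow (Real.rpow_pos_of_pos hΓ2 α)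
  rw [hx] at hfin
  exact hfin
end

section
/- The LRU prefactor λ_α = (1/α)Γ(1 − 1/α)^α satisfies λ_α ~ e^γ/α as α → +∞ (where γ is Euler's constant) and λ_α ~ 1/(α−1) as α → 1⁺. -/
open Real Filter Asymptotics

lemma aux_slope : Tendsto (fun x : ℝ => Real.log (Real.Gamma (1 - x)) / x)
    (nhdsWithin 0 {0}ᶜ) (nhds Real.eulerMascheroniConstant) := by
  have h1 : HasDerivAt (fun x : ℝ => 1 - x) (-1) 0 := by
    simpa using (hasDerivAt_id (0:ℝ)).const_sub 1
  have h2 : HasDerivAt (fun x : ℝ => Real.Gamma (1 - x))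
      Real.eulerMascheroniConstant 0 := by
    have h0 : HasDerivAt Real.Gamma (-Real.eulerMascheroniConstant)
        ((fun x : ℝ => 1 - x) 0) := by
      simpa using Real.hasDerivAt_Gamma_one
    simpa [Function.comp_def] using h0.comp (0:ℝ) h1
  have h3 : HasDerivAt (fun x : ℝ => Real.log (Real.Gamma (1 - x)))
      Real.eulerMascheroniConstant 0 := by
    have := h2.log (by simp [Real.Gamma_one])
    simpa [Real.Gamma_one] using this
  have h4 := hasDerivAt_iff_tendsto_slope.mp h3
  refine h4.congr' ?_
  filter_upwards [self_mem_nhdsWithin] with x hx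
  simp [slope, Real.Gamma_one, div_eq_inv_mul]

lemma aux_main_s17 : Tendsto (fun α : ℝ => α * Real.log (Real.Gamma (1 - 1 / α)))
    atTop (nhds Real.eulerMascheroniConstant) := by
  have hinv : Tendsto (fun α : ℝ => 1 / α) atTop (nhdsWithin 0 {0}ᶜ) := by
    refine tendsto_nhdsWithin_of_tendsto_nhds_of_eventually_within _
      (by simpa [one_div] using tendsto_inv_atTop_zero) ?_
    filter_upwards [eventually_gt_atTop (0:ℝ)] with α hα
    simp [one_div, inv_ne_zero hα.ne']
  have := aux_slope.comp hinv
  refine this.congr' ?_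
  filter_upwards [eventually_gt_atTop (0:ℝ)] with α hα
  simp only [Function.comp_apply, one_div, div_inv_eq_mul]
  ring

/-- The LRU prefactor `λ_α = (1/α)Γ(1 - 1/α)^α` satisfies `λ_α ~ e^γ/α` as `α → +∞`
(`γ` Euler's constant) and `λ_α ~ 1/(α-1)` as `α → 1⁺`. -/
theorem stmt17 :
    Asymptotics.IsEquivalent atTop
        (fun α : ℝ => (1 / α) * Real.Gamma (1 - 1 / α) ^ α)
        (fun α : ℝ => Real.exp Real.eulerMascheroniConstant / α) ∧
      Asymptotics.IsEquivalent (nhdsWithin 1 (Set.Ioi 1))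
        (fun α : ℝ => (1 / α) * Real.Gamma (1 - 1 / α) ^ α)
        (fun α : ℝ => 1 / (α - 1)) := by
  constructor
  · rw [isEquivalent_iff_tendsto_one (by
      filter_upwards [eventually_gt_atTop (0:ℝ)] with α hα
      positivity)]
    have key : Tendsto (fun α : ℝ =>
        Real.exp (α * Real.log (Real.Gamma (1 - 1 / α))) / Real.exp Real.eulerMascheroniConstant)
        atTop (nhds 1) := by
      have := (Real.continuous_exp.continuousAt.tendsto.comp aux_main_s17).div_const
        (Real.exp Real.eulerMascheroniConstant)
      simpa using this
    refine key.congr' ?_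
    filter_upwards [eventually_gt_atTop (1:ℝ)] with α hα
    have hα0 : (0:ℝ) < α := lt_trans one_pos hα
    have hbase : 0 < Real.Gamma (1 - 1 / α) := by
      apply Real.Gamma_pos_of_pos
      rw [sub_pos]
      exact (div_lt_one hα0).mpr hα
    have : Real.Gamma (1 - 1 / α) ^ α = Real.exp (α * Real.log (Real.Gamma (1 - 1 / α))) := by
      rw [Real.rpow_def_of_pos hbase, mul_comm]
    simp only [Pi.div_apply, this]
    field_simp
  · rw [isEquivalent_iff_tendsto_one (by
      filter_upwards [self_mem_nhdsWithin] with α (hα : 1 < α)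
      have : 0 < α - 1 := by linarith
      positivity)]
    -- ratio = Γ(2-1/α)^α * α^(α-1) * (α-1)^(1-α)
    have hmem : Tendsto (fun α : ℝ => α) (nhdsWithin 1 (Set.Ioi 1)) (nhds 1) :=
      tendsto_id.mono_left nhdsWithin_le_nhds
    have hG : Tendsto (fun α : ℝ => Real.Gamma (2 - 1 / α) ^ α)
        (nhdsWithin 1 (Set.Ioi 1)) (nhds 1) := by
      have hcont : ContinuousAt Real.Gamma 1 :=
        (Real.differentiableAt_Gamma (fun m => by
          have : (0:ℝ) ≤ m := Nat.cast_nonneg m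
          intro h; linarith)).continuousAt
      have hdiv : Tendsto (fun α : ℝ => 1 / α) (nhdsWithin 1 (Set.Ioi 1)) (nhds 1) := by
        have h0 : Tendsto (fun α : ℝ => 1 / α) (nhds (1:ℝ)) (nhds 1) := by
          simpa [one_div] using
            ((continuousAt_inv₀ (one_ne_zero : (1:ℝ) ≠ 0)).tendsto)
        exact h0.comp hmem
      have hin : Tendsto (fun α : ℝ => 2 - 1 / α) (nhdsWithin 1 (Set.Ioi 1)) (nhds 1) := by
        have h2 := (tendsto_const_nhds (x := (2:ℝ))).sub hdiv
        norm_num at h2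
        simpa [one_div] using h2
      have hGin : Tendsto (fun α : ℝ => Real.Gamma (2 - 1 / α))
          (nhdsWithin 1 (Set.Ioi 1)) (nhds 1) := by
        have := hcont.tendsto.comp hin
        simpa [Real.Gamma_one, Function.comp_def] using this
      have := hGin.rpow hmem (Or.inl one_ne_zero)
      simpa using this
    have hA : Tendsto (fun α : ℝ => α ^ (α - 1))
        (nhdsWithin 1 (Set.Ioi 1)) (nhds 1) := by
      have := hmem.rpow (hmem.sub_const 1) (Or.inl one_ne_zero)
      simpa using this
    have hB : Tendsto (fun α : ℝ => (α - 1) ^ (1 - α))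
        (nhdsWithin 1 (Set.Ioi 1)) (nhds 1) := by
      have hlog : Tendsto (fun α : ℝ => (α - 1) * Real.log (α - 1))
          (nhdsWithin 1 (Set.Ioi 1)) (nhds 0) := by
        have hsub : Tendsto (fun α : ℝ => α - 1) (nhdsWithin 1 (Set.Ioi 1)) (nhds 0) := by
          simpa using hmem.sub_const 1
        have := (Real.continuous_mul_log.tendsto 0).comp hsub
        simpa [Function.comp_def] using this
      have hlogn : Tendsto (fun α : ℝ => -((α - 1) * Real.log (α - 1)))
          (nhdsWithin 1 (Set.Ioi 1)) (nhds 0) := by simpa using hlog.neg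
      have := (Real.continuous_exp.tendsto 0).comp hlogn
      rw [Real.exp_zero] at this
      refine this.congr' ?_
      filter_upwards [self_mem_nhdsWithin] with α (hα : 1 < α)
      have h1 : 0 < α - 1 := by linarith
      rw [Function.comp_apply, Real.rpow_def_of_pos h1]
      ring_nf
    have key := (hG.mul hA).mul hB
    rw [show (1:ℝ) * 1 * 1 = 1 by norm_num] at key
    refine key.congr' ?_
    filter_upwards [self_mem_nhdsWithin] with α (hα : 1 < α)
    have hα0 : (0:ℝ) < α := lt_trans one_pos hα
    have h1 : 0 < α - 1 := by linarith
    have hx : (0:ℝ) < 1 - 1 / α := by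
      rw [sub_pos]; exact (div_lt_one hα0).mpr hα
    have hΓsplit : Real.Gamma (1 - 1 / α) = Real.Gamma (2 - 1 / α) * (α / (α - 1)) := by
      have := Real.Gamma_add_one hx.ne'
      have h2 : 1 - 1 / α + 1 = 2 - 1 / α := by ring
      rw [h2] at this
      rw [this]
      field_simp
    have hG2 : 0 < Real.Gamma (2 - 1 / α) := Real.Gamma_pos_of_pos (by linarith)
    have hfrac : (0:ℝ) < α / (α - 1) := by positivity
    have hpow : Real.Gamma (1 - 1 / α) ^ α
        = Real.Gamma (2 - 1 / α) ^ α * (α ^ α / (α - 1) ^ α) := by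
      rw [hΓsplit, Real.mul_rpow hG2.le hfrac.le, Real.div_rpow hα0.le h1.le]
    have hαpow : α ^ (α - 1) = α ^ α / α := by
      rw [Real.rpow_sub hα0, Real.rpow_one]
    have hβpow : (α - 1) ^ (1 - α) = (α - 1) / (α - 1) ^ α := by
      rw [show (1:ℝ) - α = 1 - α by rfl, Real.rpow_sub h1, Real.rpow_one]
    have hne1 : Real.Gamma (2 - 1 / α) ^ α ≠ 0 := (Real.rpow_pos_of_pos hG2 α).ne'
    have hne2 : (α:ℝ) ^ α ≠ 0 := (Real.rpow_pos_of_pos hα0 α).ne'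
    have hne3 : (α - 1) ^ α ≠ 0 := (Real.rpow_pos_of_pos h1 α).ne'
    simp only [Pi.div_apply]
    rw [hpow, hαpow, hβpow]
    field_simp
end
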